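/- arXiv:2510.04445 — 12 statements merged into one kernel-verified Lean document; each statement's English description precedes it below -/
import Mathlib

section
/- Let N, p, M be positive integers with N ≥ p. Define F(s) = (|N − s·p| + M)·s for positive integers s, and set s₁ = ⌊N/p⌋ and s₂ = ⌈N/p⌉. Then for every positive integer s one has min{F(1), F(s₁), F(s₂)} ≤ F(s); moreover, if s ∉ {1, s₁, s₂} then the inequality is strict, i.e. min{F(1), F(s₁), F(s₂)} < F(s). -/
set_option maxHeartbeats 1000000

private lemma aux1 (n P m a t : ℤ) (h : 0 < (a - t) * (P * t + P * a - n - m)) :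
    (n - a * P + m) * a < (n - t * P + m) * t := by nlinarith [h]

private lemma aux2 (n P m t : ℤ) (h : 0 < (t - 1) * (n + m - P * t - P)) :
    n - P + m < (n - t * P + m) * t := by nlinarith [h]

private lemma aux3 (n P m b t : ℤ) (h : 0 < (t - b) * (P * t + P * b - n + m)) :
    (b * P - n + m) * b < (t * P - n + m) * t := by nlinarith [h]


/-- Lemma A.1 of the paper.
Let `N, p, M` be positive integers with `N ≥ p`. Define `F s = (|N − s·p| + M)·s`
for positive integers `s`, and set `s₁ = ⌊N/p⌋`, `s₂ = ⌈N/p⌉`. Then for every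
positive integer `s` one has `min {F 1, F s₁, F s₂} ≤ F s`, with strict
inequality when `s ∉ {1, s₁, s₂}`. -/
theorem stmt0 (N p M : ℕ) (hN : 1 ≤ N) (hp : 1 ≤ p) (hM : 1 ≤ M) (hNp : p ≤ N)
    (F : ℕ → ℤ) (hF : ∀ s : ℕ, F s = (|(N : ℤ) - s * p| + M) * s)
    (s₁ s₂ : ℕ) (hs₁ : s₁ = N / p) (hs₂ : s₂ = (N + p - 1) / p) :
    ∀ s : ℕ, 1 ≤ s →
      min (F 1) (min (F s₁) (F s₂)) ≤ F s ∧
      (s ≠ 1 → s ≠ s₁ → s ≠ s₂ → min (F 1) (min (F s₁) (F s₂)) < F s) := by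
  have hp' : (0:ℤ) < p := by exact_mod_cast hp
  have hM' : (1:ℤ) ≤ M := by exact_mod_cast hM
  have hn : (p:ℤ) ≤ N := by exact_mod_cast hNp
  have ea : (N:ℤ) = p * s₁ + (N % p : ℕ) := by
    rw [hs₁]; exact_mod_cast (Nat.div_add_mod N p).symm
  have hra : ((N % p : ℕ):ℤ) < p := by exact_mod_cast Nat.mod_lt N (by omega)
  have hra0 : (0:ℤ) ≤ ((N % p : ℕ):ℤ) := by positivity
  have eb : ((N + p - 1 : ℕ):ℤ) = p * s₂ + ((N + p - 1) % p : ℕ) := by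
    rw [hs₂]; exact_mod_cast (Nat.div_add_mod (N + p - 1) p).symm
  have hK : ((N + p - 1 : ℕ):ℤ) = (N:ℤ) + p - 1 := by omega
  have hrb : (((N + p - 1) % p : ℕ):ℤ) < p := by
    exact_mod_cast Nat.mod_lt _ (show 0 < p by omega)
  have hrb0 : (0:ℤ) ≤ (((N + p - 1) % p : ℕ):ℤ) := by positivity
  have hA1 : (p:ℤ) * s₁ ≤ N := by linarith
  have hA2 : (N:ℤ) < p * s₁ + p := by linarith
  have hB1 : (N:ℤ) ≤ p * s₂ := by linarith
  have hB2 : (p:ℤ) * s₂ ≤ N + p - 1 := by linarith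
  have hc1 : (s₁:ℤ) * p = p * s₁ := mul_comm _ _
  have hc2 : (s₂:ℤ) * p = p * s₂ := mul_comm _ _
  have ha1 : 1 ≤ s₁ := by
    by_contra h
    have h0 : s₁ = 0 := by omega
    rw [h0] at hA2; push_cast at hA2; linarith
  have ha1' : (1:ℤ) ≤ s₁ := by exact_mod_cast ha1
  have hba : s₂ ≤ s₁ + 1 := by
    by_contra h
    have h2 : (s₁:ℤ) + 2 ≤ s₂ := by exact_mod_cast (show s₁ + 2 ≤ s₂ by omega)
    nlinarith
  have hab : s₁ ≤ s₂ := by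
    by_contra h
    have h2 : (s₂:ℤ) + 1 ≤ s₁ := by exact_mod_cast (show s₂ + 1 ≤ s₁ by omega)
    nlinarith
  have hF1 : F 1 = (N:ℤ) - p + M := by
    rw [hF]; push_cast
    rw [abs_of_nonneg (by linarith : (0:ℤ) ≤ (N:ℤ) - 1 * p)]; ring
  have hFa : F s₁ = ((N:ℤ) - s₁ * p + M) * s₁ := by
    rw [hF]
    rw [abs_of_nonneg (by linarith : (0:ℤ) ≤ (N:ℤ) - (s₁:ℤ) * p)]
  have hFb : F s₂ = ((s₂:ℤ) * p - N + M) * s₂ := by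
    rw [hF]
    rw [abs_of_nonpos (by linarith : ((N:ℤ) - (s₂:ℤ) * p) ≤ 0)]; ring_nf
  intro s hs
  by_cases h1 : s = 1
  · subst h1; exact ⟨min_le_left _ _, fun h => absurd rfl h⟩
  by_cases hA : s = s₁
  · subst hA
    exact ⟨le_trans (min_le_right _ _) (min_le_left _ _), fun _ h => absurd rfl h⟩
  by_cases hB : s = s₂
  · subst hB
    exact ⟨le_trans (min_le_right _ _) (min_le_right _ _), fun _ _ h => absurd rfl h⟩
  have key : min (F 1) (min (F s₁) (F s₂)) < F s := by
    rcases (show (2 ≤ s ∧ s < s₁) ∨ s₂ < s by omega) with ⟨hs2, hlt⟩ | hgt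
    · have hsZ : (2:ℤ) ≤ s := by exact_mod_cast hs2
      have hltZ : (s:ℤ) < s₁ := by exact_mod_cast hlt
      have hspc : (s:ℤ) * p = p * s := mul_comm _ _
      have hFs : F s = ((N:ℤ) - s * p + M) * s := by
        rw [hF]
        have hsp : (s:ℤ) * p ≤ ((s₁:ℤ) - 1) * p :=
          mul_le_mul_of_nonneg_right (by linarith) hp'.le
        rw [abs_of_nonneg (show (0:ℤ) ≤ (N:ℤ) - (s:ℤ) * p by nlinarith [hsp])]
      rcases le_or_gt ((N:ℤ) + M) (p * s + p) with hd | hd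
      · have hpa : (p:ℤ) * 1 < p * s₁ :=
          mul_lt_mul_of_pos_left (by linarith) hp'
        have hq : (0:ℤ) < p * s + p * s₁ - N - M := by linarith
        refine lt_of_le_of_lt (le_trans (min_le_right _ _) (min_le_left _ _)) ?_
        rw [hFa, hFs]
        exact aux1 _ _ _ _ _ (mul_pos (show (0:ℤ) < (s₁:ℤ) - s by linarith) hq)
      · refine lt_of_le_of_lt (min_le_left _ _) ?_
        rw [hF1, hFs]
        exact aux2 _ _ _ _ (mul_pos (show (0:ℤ) < (s:ℤ) - 1 by linarith)
          (show (0:ℤ) < (N:ℤ) + M - p * s - p by linarith))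
    · have hgtZ : (s₂:ℤ) < s := by exact_mod_cast hgt
      have hb1' : (1:ℤ) ≤ s₂ := by exact_mod_cast (show 1 ≤ s₂ by omega)
      have hsZ : (1:ℤ) ≤ s := by exact_mod_cast hs
      have hFs : F s = ((s:ℤ) * p - N + M) * s := by
        rw [hF]
        have hsp : (s₂:ℤ) * p ≤ (s:ℤ) * p :=
          mul_le_mul_of_nonneg_right (by linarith) hp'.le
        rw [abs_of_nonpos (show ((N:ℤ) - (s:ℤ) * p) ≤ 0 by linarith)]; ring_nf
      have hps : (0:ℤ) < p * s := mul_pos hp' (by linarith)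
      have hq : (0:ℤ) < p * s + p * s₂ - N + M := by linarith
      refine lt_of_le_of_lt (le_trans (min_le_right _ _) (min_le_right _ _)) ?_
      rw [hFb, hFs]
      exact aux3 _ _ _ _ _ (mul_pos (show (0:ℤ) < (s:ℤ) - s₂ by linarith) hq)
  exact ⟨key.le, fun _ _ _ => key⟩
end

section
/- Let N, p be integers with N > p ≥ 3 and (p, N) ≠ (3, 8). Define F(s) = (|N − s·p| + 1)·s for positive integers s, and set s₁ = ⌊N/p⌋ and s₂ = ⌈N/p⌉. Then for every positive integer s one has min{F(s₁), F(s₂)} ≤ F(s); moreover, if s ∉ {s₁, s₂} then min{F(s₁), F(s₂)} < F(s). -/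
set_option maxHeartbeats 1600000 in
/-- Lemma A.2 of the paper.
Let `N, p` be integers with `N > p ≥ 3` and `(p, N) ≠ (3, 8)`. Define
`F s = (|N − s·p| + 1)·s`, `s₁ = ⌊N/p⌋`, `s₂ = ⌈N/p⌉`. Then for every positive
integer `s`, `min {F s₁, F s₂} ≤ F s`, strictly when `s ∉ {s₁, s₂}`. -/
theorem stmt1 (N p : ℕ) (hp : 3 ≤ p) (hpN : p < N) (hex : ¬(p = 3 ∧ N = 8))
    (F : ℕ → ℤ) (hF : ∀ s : ℕ, F s = (|(N : ℤ) - s * p| + 1) * s)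
    (s₁ s₂ : ℕ) (hs₁ : s₁ = N / p) (hs₂ : s₂ = (N + p - 1) / p) :
    ∀ s : ℕ, 1 ≤ s →
      min (F s₁) (F s₂) ≤ F s ∧
      (s ≠ s₁ → s ≠ s₂ → min (F s₁) (F s₂) < F s) := by
  have hp0 : 0 < p := by omega
  set q := N / p with hq
  set r := N % p with hr
  have hNe : N = p * q + r := (Nat.div_add_mod N p).symm
  have hrlt : r < p := Nat.mod_lt _ hp0
  have hq1 : 1 ≤ q := (Nat.one_le_div_iff hp0).mpr hpN.le
  have hs₂' : s₂ = if r = 0 then q else q + 1 := by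
    rw [hs₂]
    split_ifs with h0
    · have h1 : N + p - 1 = (p - 1) + p * q := by omega
      rw [h1, Nat.add_mul_div_left _ _ hp0, Nat.div_eq_of_lt (by omega), zero_add]
    · have h1 : N + p - 1 = (r - 1) + p * (q + 1) := by
        rw [Nat.mul_add, Nat.mul_one]; omega
      rw [h1, Nat.add_mul_div_left _ _ hp0, Nat.div_eq_of_lt (by omega), zero_add]
  have hNz : (N : ℤ) = p * q + r := by exact_mod_cast hNe
  have hPz : (3:ℤ) ≤ (p:ℤ) := by exact_mod_cast hp
  have hQz : (1:ℤ) ≤ (q:ℤ) := by exact_mod_cast hq1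
  have hRz : (r:ℤ) < (p:ℤ) := by exact_mod_cast hrlt
  have hR0 : (0:ℤ) ≤ (r:ℤ) := by positivity
  have habs_le : ∀ s : ℕ, s ≤ q → |(N:ℤ) - s * p| = (N:ℤ) - s * p := by
    intro s hsq
    apply abs_of_nonneg
    have hsq' : (s:ℤ) ≤ q := by exact_mod_cast hsq
    nlinarith [mul_nonneg (by positivity : (0:ℤ) ≤ (p:ℤ)) (by linarith : (0:ℤ) ≤ (q:ℤ) - s)]
  have habs_ge : ∀ s : ℕ, q + 1 ≤ s → |(N:ℤ) - s * p| = (s:ℤ) * p - N := by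
    intro s hsq
    rw [abs_sub_comm]
    apply abs_of_nonneg
    have hsq' : (q:ℤ) + 1 ≤ s := by exact_mod_cast hsq
    nlinarith [mul_nonneg (by positivity : (0:ℤ) ≤ (p:ℤ)) (by linarith : (0:ℤ) ≤ (s:ℤ) - q - 1)]
  have hFq : F q = ((r:ℤ) + 1) * q := by
    rw [hF, habs_le q le_rfl, hNz]; ring
  have hFq1 : F (q+1) = ((p:ℤ) - r + 1) * ((q:ℤ) + 1) := by
    rw [hF, habs_ge (q+1) le_rfl, hNz]; push_cast; ring
  intro s hs
  have hS1 : (1:ℤ) ≤ (s:ℤ) := by exact_mod_cast hs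
  by_cases h0 : r = 0
  · -- r = 0 : s₁ = s₂ = q
    have hs2q : s₂ = q := by rw [hs₂']; simp [h0]
    have hr0 : (r:ℤ) = 0 := by exact_mod_cast h0
    have hmin : min (F s₁) (F s₂) = ((r:ℤ)+1) * q := by
      rw [hs₁, hs2q, min_self, hFq]
    rcases lt_trichotomy s q with hlt | heq | hgt
    · have hsq : (s:ℤ) + 1 ≤ q := by exact_mod_cast hlt
      have hFs : F s = ((N:ℤ) - s * p + 1) * s := by rw [hF, habs_le s hlt.le]
      have hkey : min (F s₁) (F s₂) < F s := by
        rw [hmin, hFs, hNz, hr0]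
        nlinarith [mul_pos (by linarith : (0:ℤ) < (q:ℤ) - s) (by linarith : (0:ℤ) < (s:ℤ)),
          mul_nonneg (mul_nonneg (by linarith : (0:ℤ) ≤ (p:ℤ) - 3) (by linarith : (0:ℤ) ≤ (q:ℤ) - s)) (by linarith : (0:ℤ) ≤ (s:ℤ)),
          mul_nonneg (mul_nonneg (by linarith : (0:ℤ) ≤ (p:ℤ)) (by linarith : (0:ℤ) ≤ (q:ℤ) - s)) (by linarith : (0:ℤ) ≤ (s:ℤ) - 1)]
      exact ⟨hkey.le, fun _ _ => hkey⟩
    · subst heq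
      refine ⟨by rw [hmin, hFq], fun h1 _ => ?_⟩
      exact absurd (by omega) h1
    · have hsq : (q:ℤ) + 1 ≤ s := by exact_mod_cast hgt
      have hFs : F s = ((s:ℤ) * p - N + 1) * s := by rw [hF, habs_ge s hgt]
      have hkey : min (F s₁) (F s₂) < F s := by
        rw [hmin, hFs, hNz, hr0]
        nlinarith [mul_nonneg (mul_nonneg (by linarith : (0:ℤ) ≤ (p:ℤ)) (by linarith : (0:ℤ) ≤ (s:ℤ) - q - 1)) (by linarith : (0:ℤ) ≤ (s:ℤ)),
          mul_pos (by linarith : (0:ℤ) < (p:ℤ)) (by linarith : (0:ℤ) < (s:ℤ))]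
      exact ⟨hkey.le, fun _ _ => hkey⟩
  · -- r ≥ 1 : s₁ = q, s₂ = q + 1
    have hs2q : s₂ = q + 1 := by rw [hs₂']; simp [h0]
    have hr1 : (1:ℤ) ≤ (r:ℤ) := by
      have : 1 ≤ r := by omega
      exact_mod_cast this
    have hminA : min (F s₁) (F s₂) ≤ ((r:ℤ)+1) * q := by
      rw [hs₁]; exact (min_le_left _ _).trans_eq hFq
    have hminB : min (F s₁) (F s₂) ≤ ((p:ℤ) - r + 1) * ((q:ℤ)+1) := by
      rw [hs2q]; exact (min_le_right _ _).trans_eq hFq1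
    rcases lt_trichotomy s q with hlt | heq | hgt
    · -- 1 ≤ s ≤ q - 1
      have hsq : (s:ℤ) + 1 ≤ q := by exact_mod_cast hlt
      have hFs : F s = ((N:ℤ) - s * p + 1) * s := by rw [hF, habs_le s hlt.le]
      by_cases hcrit : s = 1 ∧ r = p - 1
      · -- critical case : F s = p*q, compare with B
        obtain ⟨hs1', hrp⟩ := hcrit
        have hrpz : (r:ℤ) = (p:ℤ) - 1 := by
          have h' : r + 1 = p := by omega
          have h'' : (r:ℤ) + 1 = p := by exact_mod_cast h'
          linarith
        have hq2 : (2:ℤ) ≤ (q:ℤ) := by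
          have : 2 ≤ q := by omega
          exact_mod_cast this
        have hkey : ((p:ℤ) - r + 1) * ((q:ℤ)+1) < F s := by
          rw [hFs, hNz, hrpz]
          subst hs1'
          push_cast
          -- goal : (p - (p-1) + 1) * (q+1) < (p*q + (p-1) - 1*p + 1) * 1
          -- i.e. 2*(q+1) < p*q
          have hcase : (4:ℤ) ≤ p ∨ (3:ℤ) ≤ q := by
            rcases Nat.lt_or_ge p 4 with hp4 | hp4
            · right
              have hp3 : p = 3 := by omega
              have hq3 : 3 ≤ q := by
                rcases Nat.lt_or_ge q 3 with hq3 | hq3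
                · exfalso; apply hex; refine ⟨hp3, ?_⟩; subst hp3; omega
                · exact hq3
              exact_mod_cast hq3
            · left; exact_mod_cast hp4
          rcases hcase with h | h
          · nlinarith
          · nlinarith
        exact ⟨hminB.trans hkey.le, fun _ _ => hminB.trans_lt hkey⟩
      · -- non-critical : A < F s
        have hps : (0:ℤ) < (p:ℤ) * s - r - 1 := by
          rcases Nat.lt_or_ge s 2 with hs2 | hs2
          · have hs1' : s = 1 := by omega
            have hrle : r + 2 ≤ p := by
              rcases Nat.lt_or_ge (r+2) (p+1) with h | h
              · omega
              · exfalso; exact hcrit ⟨hs1', by omega⟩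
            have : (r:ℤ) + 2 ≤ p := by exact_mod_cast hrle
            rw [hs1']; push_cast; linarith
          · have : (2:ℤ) ≤ (s:ℤ) := by exact_mod_cast hs2
            nlinarith
        have hkey : ((r:ℤ)+1) * q < F s := by
          rw [hFs, hNz]
          nlinarith [mul_pos (by linarith : (0:ℤ) < (q:ℤ) - s) hps]
        exact ⟨hminA.trans hkey.le, fun _ _ => hminA.trans_lt hkey⟩
    · subst heq
      refine ⟨hminA.trans_eq hFq.symm, fun h1 _ => ?_⟩
      exact absurd (by omega) h1
    · rcases Nat.lt_or_ge s (q+2) with hlt2 | hge2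
      · -- s = q + 1
        have hs1' : s = q + 1 := by omega
        subst hs1'
        refine ⟨hminB.trans_eq hFq1.symm, fun _ h2 => ?_⟩
        exact absurd (by omega) h2
      · -- s ≥ q + 2 : B < F s
        have hsq : (q:ℤ) + 2 ≤ s := by exact_mod_cast hge2
        have hFs : F s = ((s:ℤ) * p - N + 1) * s := by rw [hF, habs_ge s (by omega)]
        have hkey : ((p:ℤ) - r + 1) * ((q:ℤ)+1) < F s := by
          rw [hFs, hNz]
          nlinarith [mul_nonneg (mul_nonneg (by linarith : (0:ℤ) ≤ (p:ℤ)) (by linarith : (0:ℤ) ≤ (s:ℤ) - q - 1)) (by linarith : (0:ℤ) ≤ (s:ℤ)),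
            mul_nonneg (by linarith : (0:ℤ) ≤ (p:ℤ) - r + 1) (by linarith : (0:ℤ) ≤ (s:ℤ) - q - 1),
            mul_pos (by linarith : (0:ℤ) < (p:ℤ)) (by linarith : (0:ℤ) < (s:ℤ))]
        exact ⟨hminB.trans hkey.le, fun _ _ => hminB.trans_lt hkey⟩
end

section
/- Let N, p be integers with N odd and N > p ≥ 2, and define F, G, H, s₁, s₂ as in the context. Then for every positive integer s one has min{H(1), H(s₁), H(s₂)} ≤ H(s); moreover, if s ∉ {1, s₁, s₂} then min{H(1), H(s₁), H(s₂)} < H(s). -/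
set_option maxHeartbeats 2000000


/-- Lemma A.3 (1) of the paper.
Let `N, p` be integers with `N` odd and `N > p ≥ 2`. With
`F s = (|N − s·p| + 2)·s`, `G s = (|N − s·p| + 1)·s/2`, `s₁ = ⌊N/p⌋`,
`s₂ = ⌈N/p⌉`, and `H s = min {F s, G s}` if either (`s ≤ s₁`, `p` even, `s` odd)
or (`s ≥ s₂`, `s` even), and `H s = F s` otherwise, we have
`min {H 1, H s₁, H s₂} ≤ H s` for all positive integers `s`, strictly when
`s ∉ {1, s₁, s₂}`. -/
theorem stmt2 (N p : ℕ) (hN : Odd N) (hp : 2 ≤ p) (hpN : p < N)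
    (F G H : ℕ → ℚ)
    (hF : ∀ s : ℕ, F s = (|(N : ℚ) - s * p| + 2) * s)
    (hG : ∀ s : ℕ, G s = (|(N : ℚ) - s * p| + 1) * s / 2)
    (s₁ s₂ : ℕ) (hs₁ : s₁ = N / p) (hs₂ : s₂ = (N + p - 1) / p)
    (hH : ∀ s : ℕ, H s =
      if (s ≤ s₁ ∧ Even p ∧ Odd s) ∨ (s₂ ≤ s ∧ Even s)
      then min (F s) (G s) else F s) :
    ∀ s : ℕ, 1 ≤ s →
      min (H 1) (min (H s₁) (H s₂)) ≤ H s ∧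
      (s ≠ 1 → s ≠ s₁ → s ≠ s₂ → min (H 1) (min (H s₁) (H s₂)) < H s) := by
  have hp0 : 0 < p := by omega
  -- floor facts
  have hA1 : s₁ * p ≤ N := by
    rw [hs₁]; exact Nat.div_mul_le_self _ _
  have hA2 : N < s₁ * p + p := by
    have h1 : p * (N / p) + N % p = N := Nat.div_add_mod _ _
    have h2 : N % p < p := Nat.mod_lt _ hp0
    rw [← hs₁] at h1
    have h3 : p * s₁ = s₁ * p := Nat.mul_comm _ _
    omega
  -- ceil facts
  have hB1 : N ≤ s₂ * p := by
    have h1 : p * ((N + p - 1) / p) + (N + p - 1) % p = N + p - 1 := Nat.div_add_mod _ _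
    have h2 : (N + p - 1) % p < p := Nat.mod_lt _ hp0
    rw [← hs₂] at h1
    have h3 : p * s₂ = s₂ * p := Nat.mul_comm _ _
    omega
  have hB2 : s₂ * p ≤ N + p - 1 := by
    rw [hs₂]; exact Nat.div_mul_le_self _ _
  have hs₁pos : 1 ≤ s₁ := by
    rw [hs₁]; exact (Nat.one_le_div_iff hp0).2 hpN.le
  have hs₁s₂ : s₁ ≤ s₂ := by
    rw [hs₁, hs₂]; exact Nat.div_le_div_right (by omega)
  have hs₂s₁ : s₂ ≤ s₁ + 1 := by
    have hx : (s₁ + 2) * p = s₁ * p + 2 * p := by ring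
    have h : s₂ * p < (s₁ + 2) * p := by omega
    have := lt_of_mul_lt_mul_right h (Nat.zero_le p)
    omega
  -- rational casts
  have hpQ : (2:ℚ) ≤ (p:ℚ) := by exact_mod_cast hp
  have hB1Q : (N:ℚ) ≤ (s₂:ℚ) * p := by exact_mod_cast hB1
  have hs₂Q1 : (1:ℚ) ≤ (s₂:ℚ) := by exact_mod_cast le_trans hs₁pos hs₁s₂
  -- abs helpers
  have habs_le : ∀ t : ℕ, t * p ≤ N → |(N:ℚ) - (t:ℚ) * (p:ℚ)| = (N:ℚ) - t * p := by
    intro t ht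
    have : ((t:ℚ)) * p ≤ N := by exact_mod_cast ht
    rw [abs_of_nonneg (by linarith)]
  have habs_ge : ∀ t : ℕ, N ≤ t * p → |(N:ℚ) - (t:ℚ) * (p:ℚ)| = (t:ℚ) * p - N := by
    intro t ht
    have : (N:ℚ) ≤ (t:ℚ) * p := by exact_mod_cast ht
    rw [abs_of_nonpos (by linarith), neg_sub]
  have hGF : ∀ t : ℕ, G t ≤ F t := by
    intro t
    rw [hF, hG]
    have h1 : (0:ℚ) ≤ |(N:ℚ) - t * p| := abs_nonneg _
    have h2 : (0:ℚ) ≤ (t:ℚ) := Nat.cast_nonneg t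
    nlinarith
  have hH' : ∀ t : ℕ, H t =
      if (t ≤ s₁ ∧ Even p ∧ Odd t) ∨ (s₂ ≤ t ∧ Even t) then G t else F t := by
    intro t
    rw [hH t]
    split_ifs with h
    · exact min_eq_right (hGF t)
    · rfl
  have hHle : ∀ t : ℕ, H t ≤ F t := by
    intro t
    rw [hH' t]
    split_ifs with h
    · exact hGF t
    · exact le_refl _
  have hF1 : F 1 = (N:ℚ) - p + 2 := by
    rw [hF 1, habs_le 1 (by omega)]; push_cast; ring
  have hG1 : G 1 = ((N:ℚ) - p + 1) / 2 := by
    rw [hG 1, habs_le 1 (by omega)]; push_cast; ring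
  intro s hs
  set m := min (H 1) (min (H s₁) (H s₂)) with hm
  have hm1 : m ≤ H 1 := min_le_left _ _
  have hmA : m ≤ H s₁ := le_trans (min_le_right _ _) (min_le_left _ _)
  have hmB : m ≤ H s₂ := le_trans (min_le_right _ _) (min_le_right _ _)
  have key : s ≠ 1 → s ≠ s₁ → s ≠ s₂ → m < H s := by
    intro h1 h2 h3
    have hcase : (2 ≤ s ∧ s + 1 ≤ s₁) ∨ (s₂ + 1 ≤ s) := by omega
    rcases hcase with ⟨hs2, hss₁⟩ | hss₂
    · -- Case A : 2 ≤ s < s₁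
      have hsple : s * p ≤ N := le_trans (Nat.mul_le_mul_right p (by omega : s ≤ s₁)) hA1
      have hsp1 : (s + 1) * p ≤ N := le_trans (Nat.mul_le_mul_right p hss₁) hA1
      have hspQ : ((s:ℚ) + 1) * p ≤ N := by exact_mod_cast hsp1
      have habsS : |(N:ℚ) - (s:ℚ) * p| = (N:ℚ) - s * p := habs_le s hsple
      have hsQ : (2:ℚ) ≤ (s:ℚ) := by exact_mod_cast hs2
      rw [hH' s]
      split_ifs with hc
      · -- H s = G s, hence p even
        have hps : Even p := by
          rcases hc with ⟨_, hev, _⟩ | ⟨hle, _⟩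
          · exact hev
          · omega
        have hH1 : H 1 = G 1 := by
          rw [hH' 1, if_pos (Or.inl ⟨hs₁pos, hps, odd_one⟩)]
        have hlt : G 1 < G s := by
          rw [hG1, hG s, habsS]
          nlinarith [mul_pos (by linarith : (0:ℚ) < (s:ℚ) - 1)
            (by linarith : (0:ℚ) < (N:ℚ) + 1 - ((s:ℚ) + 1) * p)]
        exact lt_of_le_of_lt (hm1.trans (le_of_eq hH1)) hlt
      · have hlt : F 1 < F s := by
          rw [hF1, hF s, habsS]
          nlinarith [mul_pos (by linarith : (0:ℚ) < (s:ℚ) - 1)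
            (by linarith : (0:ℚ) < (N:ℚ) + 2 - ((s:ℚ) + 1) * p)]
        exact lt_of_le_of_lt (hm1.trans (hHle 1)) hlt
    · -- Case B : s ≥ s₂ + 1
      have hNsp : N ≤ s * p := le_trans hB1 (Nat.mul_le_mul_right p (by omega))
      have habsS : |(N:ℚ) - (s:ℚ) * p| = (s:ℚ) * p - N := habs_ge s hNsp
      have habs2 : |(N:ℚ) - (s₂:ℚ) * p| = (s₂:ℚ) * p - N := habs_ge s₂ hB1
      have hsQ : (s₂:ℚ) + 1 ≤ (s:ℚ) := by exact_mod_cast hss₂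
      rw [hH' s]
      split_ifs with hc
      · -- H s = G s, s even
        have hGs : ((s₂:ℚ) * p + p - N + 1) * ((s₂:ℚ) + 1) ≤ ((s:ℚ) * p - N + 1) * s := by
          nlinarith [mul_nonneg (by linarith : (0:ℚ) ≤ (s₂:ℚ) * p + p - N)
              (by linarith : (0:ℚ) ≤ (s:ℚ) - s₂ - 1),
            mul_nonneg (mul_nonneg (by linarith : (0:ℚ) ≤ (s:ℚ) - s₂ - 1)
              (by linarith : (0:ℚ) ≤ (p:ℚ))) (by linarith : (0:ℚ) ≤ (s:ℚ))]
        rcases Nat.even_or_odd s₂ with h2e | h2o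
        · have hHs₂ : H s₂ = G s₂ := by
            rw [hH' s₂, if_pos (Or.inr ⟨le_refl _, h2e⟩)]
          have hlt : G s₂ < G s := by
            rw [hG s₂, hG s, habsS, habs2]
            nlinarith [mul_nonneg (by linarith : (0:ℚ) ≤ (s₂:ℚ) * p - N)
                (by linarith : (0:ℚ) ≤ (s:ℚ) - s₂),
              mul_nonneg (mul_nonneg (by linarith : (0:ℚ) ≤ (s:ℚ) - s₂)
                (by linarith : (0:ℚ) ≤ (p:ℚ))) (by linarith : (0:ℚ) ≤ (s:ℚ))]
          exact lt_of_le_of_lt (hmB.trans (le_of_eq hHs₂)) hlt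
        · rcases Nat.even_or_odd p with hpe | hpo
          · -- p even : use H 1 = G 1
            have hH1 : H 1 = G 1 := by
              rw [hH' 1, if_pos (Or.inl ⟨hs₁pos, hpe, odd_one⟩)]
            have hlt : G 1 < G s := by
              rw [hG1, hG s, habsS]
              nlinarith [mul_nonneg (by linarith : (0:ℚ) ≤ (s₂:ℚ) * p - N)
                (by linarith : (0:ℚ) ≤ (s₂:ℚ))]
            exact lt_of_le_of_lt (hm1.trans (le_of_eq hH1)) hlt
          · -- p odd ; with s₂ odd, r := s₂p - N is even
            have hodd : Odd (s₂ * p) := h2o.mul hpo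
            obtain ⟨a, ha⟩ := hodd
            obtain ⟨b, hb⟩ := hN
            obtain ⟨cc, hcc⟩ := hpo
            have hre : s₂ * p + 3 ≤ N + p ∨ s₂ * p = N + p - 1 := by omega
            rcases hre with hle | heq
            · -- F s₂ < G s
              have hleQ : (s₂:ℚ) * p + 3 ≤ (N:ℚ) + p := by exact_mod_cast hle
              have hlt : F s₂ < G s := by
                rw [hF s₂, hG s, habsS, habs2]
                nlinarith [mul_nonneg (by linarith : (0:ℚ) ≤ (N:ℚ) + p - 3 - (s₂:ℚ) * p)
                  (by linarith : (0:ℚ) ≤ (s₂:ℚ))]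
              exact lt_of_le_of_lt (hmB.trans (hHle s₂)) hlt
            · -- r = p - 1 : F 1 < G s
              have heqQ : (s₂:ℚ) * p = (N:ℚ) + p - 1 := by
                have : s₂ * p + 1 = N + p := by omega
                have := (Nat.cast_inj (R := ℚ)).2 this
                push_cast at this
                linarith
              have hlt : F 1 < G s := by
                rw [hF1, hG s, habsS]
                nlinarith
              exact lt_of_le_of_lt (hm1.trans (hHle 1)) hlt
      · -- H s = F s : use F s₂ < F s
        have hlt : F s₂ < F s := by
          rw [hF s₂, hF s, habsS, habs2]
          nlinarith [mul_nonneg (by linarith : (0:ℚ) ≤ (s₂:ℚ) * p - N)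
              (by linarith : (0:ℚ) ≤ (s:ℚ) - s₂),
            mul_nonneg (mul_nonneg (by linarith : (0:ℚ) ≤ (s:ℚ) - s₂)
              (by linarith : (0:ℚ) ≤ (p:ℚ))) (by linarith : (0:ℚ) ≤ (s:ℚ))]
        exact lt_of_le_of_lt (hmB.trans (hHle s₂)) hlt
  refine ⟨?_, key⟩
  by_cases e1 : s = 1
  · rw [e1]; exact hm1
  by_cases e2 : s = s₁
  · rw [e2]; exact hmA
  by_cases e3 : s = s₂
  · rw [e3]; exact hmB
  exact (key e1 e2 e3).le
end

section
/- Let N, p be integers with N odd and N > p ≥ 2, and define F, G, H, s₁, s₂ as in the context. If p is odd then min{H(1), H(s₁), H(s₂)} ≤ N, and if p is even then min{H(1), H(s₁), H(s₂)} ≤ (N − 1)/2. -/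
/-- Lemma A.3 (2) of the paper.
With `N, p, F, G, H, s₁, s₂` as in Lemma A.3 (`N` odd, `N > p ≥ 2`):
if `p` is odd then `min {H 1, H s₁, H s₂} ≤ N`, and if `p` is even then
`min {H 1, H s₁, H s₂} ≤ (N − 1)/2`. -/
theorem stmt3 (N p : ℕ) (hN : Odd N) (hp : 2 ≤ p) (hpN : p < N)
    (F G H : ℕ → ℚ)
    (hF : ∀ s : ℕ, F s = (|(N : ℚ) - s * p| + 2) * s)
    (hG : ∀ s : ℕ, G s = (|(N : ℚ) - s * p| + 1) * s / 2)
    (s₁ s₂ : ℕ) (hs₁ : s₁ = N / p) (hs₂ : s₂ = (N + p - 1) / p)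
    (hH : ∀ s : ℕ, H s =
      if (s ≤ s₁ ∧ Even p ∧ Odd s) ∨ (s₂ ≤ s ∧ Even s)
      then min (F s) (G s) else F s) :
    (Odd p → min (H 1) (min (H s₁) (H s₂)) ≤ (N : ℚ)) ∧
    (Even p → min (H 1) (min (H s₁) (H s₂)) ≤ ((N : ℚ) - 1) / 2) := by
  have hHF : ∀ s, H s ≤ F s := by
    intro s; rw [hH s]; split
    · exact min_le_left _ _
    · exact le_rfl
  have hp0 : 0 < p := by omega
  have hmod : N % p + p * (N / p) = N := Nat.mod_add_div N p
  have hrlt : N % p < p := Nat.mod_lt _ hp0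
  have hs₁N : p * s₁ + N % p = N := by rw [hs₁]; omega
  have hs₁pos : 1 ≤ s₁ := by
    rw [hs₁]; exact (Nat.one_le_div_iff hp0).mpr (le_of_lt hpN)
  constructor
  · intro hpodd
    by_cases hcase : N % p + 2 ≤ p
    · -- use F s₁
      refine le_trans (le_trans (min_le_right _ _) (le_trans (min_le_left _ _) (hHF s₁))) ?_
      rw [hF]
      have hNcast : (N : ℚ) = p * s₁ + (N % p : ℕ) := by exact_mod_cast (hs₁N.symm)
      have habs : |(N : ℚ) - s₁ * p| = ((N % p : ℕ) : ℚ) := by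
        rw [hNcast, show (p:ℚ) * s₁ + ((N % p : ℕ) : ℚ) - s₁ * p = ((N % p : ℕ) : ℚ) by ring,
          abs_of_nonneg (by positivity)]
      rw [habs, hNcast]
      have h1 : ((N % p : ℕ) : ℚ) + 2 ≤ (p : ℚ) := by exact_mod_cast hcase
      have h2 : (0:ℚ) ≤ (s₁ : ℚ) := by positivity
      nlinarith [h2, h1]
    · -- r = p - 1, use G s₂
      have hr : N % p = p - 1 := by omega
      have hs₂v : s₂ = s₁ + 1 := by
        rw [hs₂]
        have : N + p - 1 = (p - 2) + (s₁ + 1) * p := by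
          rw [← hs₁N, hr]; ring_nf; omega
        rw [this, Nat.add_mul_div_right _ _ hp0, Nat.div_eq_of_lt (by omega)]
        omega
      have hps₂ : p * (s₁ + 1) = N + 1 := by rw [Nat.mul_succ]; omega
      have heven : Even (s₁ + 1) := by
        rcases Nat.even_or_odd (s₁ + 1) with h | h
        · exact h
        · exfalso
          have h1 : Odd (p * (s₁ + 1)) := hpodd.mul h
          rw [hps₂] at h1
          have h2 := Nat.odd_iff.mp h1
          have h3 := Nat.odd_iff.mp hN
          omega
      refine le_trans (le_trans (min_le_right _ _) (min_le_right _ _)) ?_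
      rw [hH s₂]
      rw [if_pos (Or.inr ⟨le_rfl, hs₂v ▸ heven⟩)]
      refine le_trans (min_le_right _ _) ?_
      rw [hG, hs₂v]
      have hNcast : (N : ℚ) = p * (s₁ + 1) - 1 := by
        have h1 : (p : ℚ) * ((s₁ : ℚ) + 1) = (N : ℚ) + 1 := by exact_mod_cast hps₂
        linarith
      have habs : |(N : ℚ) - (s₁ + 1 : ℕ) * p| = 1 := by
        rw [hNcast]; push_cast; rw [show (p:ℚ) * ((s₁:ℚ)+1) - 1 - ((s₁:ℚ)+1) * p = -1 by ring]
        simp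
      rw [habs, hNcast]
      push_cast
      have hp2 : (2:ℚ) ≤ p := by exact_mod_cast hp
      have h2 : (0:ℚ) ≤ (s₁ : ℚ) := by positivity
      nlinarith
  · intro hpeven
    refine le_trans (min_le_left _ _) ?_
    rw [hH 1, if_pos (Or.inl ⟨hs₁pos, hpeven, odd_one⟩)]
    refine le_trans (min_le_right _ _) ?_
    rw [hG]
    have habs : |(N : ℚ) - (1:ℕ) * p| = (N : ℚ) - p := by
      rw [abs_of_nonneg]
      · push_cast; ring
      · have : (p:ℚ) ≤ N := by exact_mod_cast le_of_lt hpN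
        push_cast; linarith
    rw [habs]
    have hp2 : (2:ℚ) ≤ p := by exact_mod_cast hp
    push_cast
    linarith
end

section
/- Let N, p be integers with N odd and N > p ≥ 2, and define F, G, H, s₁, s₂ as in the context. Assume s₁ > 1, that (p, N) is neither (5, 13) nor (5, 23), and that it is not the case that p = 3 and N ≡ 1 (mod 6). Then min{H(1), H(s₁), H(s₂)} < F(1). -/
/-- Lemma A.3 (3) of the paper.
With `N, p, F, G, H, s₁, s₂` as in Lemma A.3 (`N` odd, `N > p ≥ 2`):
if `s₁ > 1`, `(p, N) ∉ {(5,13), (5,23)}`, and it is not the case that `p = 3`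
and `N ≡ 1 (mod 6)`, then `min {H 1, H s₁, H s₂} < F 1`. -/
theorem stmt4 (N p : ℕ) (hN : Odd N) (hp : 2 ≤ p) (hpN : p < N)
    (F G H : ℕ → ℚ)
    (hF : ∀ s : ℕ, F s = (|(N : ℚ) - s * p| + 2) * s)
    (hG : ∀ s : ℕ, G s = (|(N : ℚ) - s * p| + 1) * s / 2)
    (s₁ s₂ : ℕ) (hs₁ : s₁ = N / p) (hs₂ : s₂ = (N + p - 1) / p)
    (hH : ∀ s : ℕ, H s =
      if (s ≤ s₁ ∧ Even p ∧ Odd s) ∨ (s₂ ≤ s ∧ Even s)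
      then min (F s) (G s) else F s)
    (hs₁big : 1 < s₁)
    (hex1 : ¬(p = 5 ∧ N = 13)) (hex2 : ¬(p = 5 ∧ N = 23))
    (hex3 : ¬(p = 3 ∧ N % 6 = 1)) :
    min (H 1) (min (H s₁) (H s₂)) < F 1 := by
  have hp0 : 0 < p := by omega
  set r := N % p with hrdef
  have hrp : r < p := Nat.mod_lt _ hp0
  have hNr : p * s₁ + r = N := by rw [hs₁, hrdef]; exact Nat.div_add_mod N p
  have hNQ : (N : ℚ) = p * s₁ + r := by exact_mod_cast hNr.symm
  have hpNQ : (p : ℚ) < N := by exact_mod_cast hpN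
  have hpQ : (2 : ℚ) ≤ p := by exact_mod_cast hp
  have hs₁Q : (2 : ℚ) ≤ s₁ := by exact_mod_cast hs₁big
  have hF1 : F 1 = (N : ℚ) - p + 2 := by
    rw [hF]; push_cast
    rw [abs_of_nonneg (by linarith)]; ring
  have hHF : ∀ s, H s ≤ F s := by
    intro s; rw [hH]; split
    · exact min_le_left _ _
    · exact le_rfl
  have hNodd : N % 2 = 1 := Nat.odd_iff.mp hN
  rcases Nat.even_or_odd p with hpe | hpo
  · -- p even: use H 1 ≤ G 1 < F 1
    have hH1 : H 1 ≤ G 1 := by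
      rw [hH, if_pos (Or.inl ⟨hs₁big.le, hpe, odd_one⟩)]
      exact min_le_right _ _
    have hG1 : G 1 = ((N : ℚ) - p + 1) / 2 := by
      rw [hG]; push_cast
      rw [abs_of_nonneg (by linarith)]; ring
    calc min (H 1) (min (H s₁) (H s₂)) ≤ H 1 := min_le_left _ _
      _ ≤ G 1 := hH1
      _ < F 1 := by rw [hG1, hF1]; linarith
  · have hp2 : p % 2 = 1 := Nat.odd_iff.mp hpo
    have hp3 : 3 ≤ p := by omega
    have hp3Q : (3 : ℚ) ≤ p := by exact_mod_cast hp3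
    -- parity relation for s₁
    have hpar : (p * s₁) % 2 = s₁ % 2 := by
      rw [Nat.mul_mod, hp2, one_mul, Nat.mod_mod]
    rcases Nat.eq_zero_or_pos r with hr0 | hr1
    · -- r = 0 : s₂ = s₁, H s₁ = F s₁ = 2 s₁
      have hs₂v : s₂ = s₁ := by
        rw [hs₂]
        have h1 : N + p - 1 = p * s₁ + (p - 1) := by omega
        rw [h1, Nat.mul_add_div hp0, Nat.div_eq_of_lt (by omega), Nat.add_zero]
      have hs₁odd : s₁ % 2 = 1 := by
        obtain ⟨m, hm⟩ : ∃ m, p * s₁ = m := ⟨_, rfl⟩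
        rw [hm] at hNr hpar; omega
      have hFs₁ : F s₁ = 2 * s₁ := by
        rw [hF, hNQ, hr0]; push_cast
        rw [show (p : ℚ) * s₁ + 0 - s₁ * p = 0 by ring, abs_zero]; ring
      calc min (H 1) (min (H s₁) (H s₂)) ≤ H s₁ :=
            le_trans (min_le_right _ _) (min_le_left _ _)
        _ ≤ F s₁ := hHF s₁
        _ < F 1 := by
            rw [hFs₁, hF1, hNQ, hr0]
            nlinarith
    · -- r ≥ 1 : s₂ = s₁ + 1
      have hs₂v : s₂ = s₁ + 1 := by
        rw [hs₂]
        have h1 : N + p - 1 = p * (s₁ + 1) + (r - 1) := by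
          rw [Nat.mul_add, Nat.mul_one]; omega
        rw [h1, Nat.mul_add_div hp0, Nat.div_eq_of_lt (by omega), Nat.add_zero]
      have hrQ : (1 : ℚ) ≤ r := by exact_mod_cast hr1
      have hrpQ : (r : ℚ) < p := by exact_mod_cast hrp
      have hFs₁ : F s₁ = ((r : ℚ) + 2) * s₁ := by
        rw [hF, hNQ]
        rw [show (p : ℚ) * s₁ + r - s₁ * p = r by ring, abs_of_nonneg (by linarith)]
      have hFs₂ : F s₂ = ((p : ℚ) - r + 2) * (s₁ + 1) := by
        rw [hF, hNQ, hs₂v]; push_cast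
        rw [show (p : ℚ) * s₁ + r - (s₁ + 1) * p = -((p : ℚ) - r) by ring, abs_neg,
          abs_of_nonneg (by linarith)]
      rcases (by omega : r + 3 ≤ p ∨ r + 2 = p ∨ r + 1 = p) with hc | hc | hc
      · -- r ≤ p - 3 : use F s₁
        have hcQ : (r : ℚ) + 3 ≤ p := by exact_mod_cast hc
        calc min (H 1) (min (H s₁) (H s₂)) ≤ H s₁ :=
              le_trans (min_le_right _ _) (min_le_left _ _)
          _ ≤ F s₁ := hHF s₁
          _ < F 1 := by
              rw [hFs₁, hF1, hNQ]
              nlinarith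
      · -- r = p - 2 : use F s₂ = 4 (s₁ + 1)
        have hs₁even : s₁ % 2 = 0 := by
          obtain ⟨m, hm⟩ : ∃ m, p * s₁ = m := ⟨_, rfl⟩
          rw [hm] at hNr hpar; omega
        have key : (p = 5 ∧ 6 ≤ s₁) ∨ 7 ≤ p := by
          rcases (by omega : p = 3 ∨ p = 5 ∨ 7 ≤ p) with h3 | h5 | h7
          · exfalso
            apply hex3
            subst h3
            constructor
            · rfl
            · omega
          · left
            subst h5
            refine ⟨rfl, ?_⟩
            have h13 : N ≠ 13 := fun h => hex1 ⟨rfl, h⟩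
            have h23 : N ≠ 23 := fun h => hex2 ⟨rfl, h⟩
            omega
          · right; exact h7
        have hcQ : (r : ℚ) + 2 = p := by exact_mod_cast hc
        calc min (H 1) (min (H s₁) (H s₂)) ≤ H s₂ :=
              le_trans (min_le_right _ _) (min_le_right _ _)
          _ ≤ F s₂ := hHF s₂
          _ < F 1 := by
              rw [hFs₂, hF1, hNQ]
              rcases key with ⟨h5, h6⟩ | h7
              · have : (p : ℚ) = 5 := by exact_mod_cast h5
                have h6Q : (6 : ℚ) ≤ s₁ := by exact_mod_cast h6
                rw [this]; nlinarith
              · have h7Q : (7 : ℚ) ≤ p := by exact_mod_cast h7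
                nlinarith
      · -- r = p - 1 : use G s₂ = s₁ + 1
        have hs₁odd : s₁ % 2 = 1 := by
          obtain ⟨m, hm⟩ : ∃ m, p * s₁ = m := ⟨_, rfl⟩
          rw [hm] at hNr hpar; omega
        have hs₂even : Even s₂ := by
          rw [hs₂v, Nat.even_add_one, Nat.even_iff]; omega
        have hHs₂ : H s₂ ≤ G s₂ := by
          rw [hH, if_pos (Or.inr ⟨le_rfl, hs₂even⟩)]
          exact min_le_right _ _
        have hcQ : (r : ℚ) + 1 = p := by exact_mod_cast hc
        have hGs₂ : G s₂ = (s₁ : ℚ) + 1 := by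
          rw [hG, hNQ, hs₂v]; push_cast
          rw [show (p : ℚ) * s₁ + r - (s₁ + 1) * p = -((p : ℚ) - r) by ring, abs_neg,
            abs_of_nonneg (by linarith)]
          rw [show (p : ℚ) - r = 1 by linarith]
          ring
        calc min (H 1) (min (H s₁) (H s₂)) ≤ H s₂ :=
              le_trans (min_le_right _ _) (min_le_right _ _)
          _ ≤ G s₂ := hHs₂
          _ < F 1 := by
              rw [hGs₂, hF1, hNQ]
              have h3 : (3 : ℚ) * s₁ ≤ p * s₁ := by
                apply mul_le_mul_of_nonneg_right hp3Q; linarith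
              linarith
end

section
/- Let n ≥ 2, let a ≥ 1 be an integer and let 1 ≤ i < j ≤ n. Then Ã(ρ̃ + a(e_i − e_j)) ≠ 0 in the group algebra if and only if i ≤ a and j > n − a. (In the notation of the paper this says: for the negative root α = −(ε_i − ε_j) of sl_n, the alternating sum E^ρ(−aα) is nonzero exactly when i ≤ a and j > n − a.) -/
/-!
If two entries of `μ` coincide, the transposition exchanging them is a sign-reversing involution
on the terms of `Ã(μ)`, so `Ã(μ) = 0`; if the entries of `μ` are distinct, `X^μ` occurs in
`Ã(μ)` only for `σ = 1`, so `Ã(μ) ≠ 0`. For `μ = ρ̃ + a(e_i − e_j)` (1-indexed) the only possible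
coincidences are `μ_i = μ_{i−a}` and `μ_j = μ_{j+a}`, and these indices exist exactly when
`i > a`, resp. `j ≤ n − a`.
-/

open Finset

/-- The alternating sum `Ã(μ) = Σ_{σ ∈ S_n} sign(σ)·X^{σ·μ}` in the group
algebra `AddMonoidAlgebra ℤ (Fin n → ℤ)`, where `(σ·μ)_i = μ_{σ⁻¹(i)}`. -/
noncomputable def Atilde (n : ℕ) (μ : Fin n → ℤ) : AddMonoidAlgebra ℤ (Fin n → ℤ) :=
  ∑ σ : Equiv.Perm (Fin n),
    (Equiv.Perm.sign σ : ℤ) • AddMonoidAlgebra.single (fun i => μ (σ⁻¹ i)) 1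

/-- The staircase tuple `ρ̃ = (n−1, n−2, …, 1, 0)`. -/
def rhoT (n : ℕ) : Fin n → ℤ := fun i => (n : ℤ) - 1 - (i : ℤ)

namespace Atilde

variable {n : ℕ}

theorem coeff_eq_sum (μ ν : Fin n → ℤ) :
    (Atilde n μ).coeff ν =
      ∑ σ : Equiv.Perm (Fin n),
        if (fun k => μ (σ⁻¹ k)) = ν then (Equiv.Perm.sign σ : ℤ) else 0 := by
  simp only [Atilde, AddMonoidAlgebra.coeff_sum, Finsupp.finsetSum_apply,
    AddMonoidAlgebra.coeff_smul, AddMonoidAlgebra.coeff_single, Finsupp.smul_apply,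
    Finsupp.single_apply, smul_eq_mul, mul_ite, mul_one, mul_zero]

theorem coeff_self_of_injective {μ : Fin n → ℤ} (hμ : Function.Injective μ) :
    (Atilde n μ).coeff μ = 1 := by
  rw [coeff_eq_sum, Finset.sum_eq_single_of_mem 1 (mem_univ _)]
  · simp
  · intro σ _ hσ
    refine if_neg fun h => hσ ?_
    exact inv_eq_one.mp (Equiv.ext fun k => hμ (congrFun h k))

theorem ne_zero_of_injective {μ : Fin n → ℤ} (hμ : Function.Injective μ) : Atilde n μ ≠ 0 :=
  fun h => by simpa [h] using coeff_self_of_injective hμ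

theorem eq_neg_self_of_comp_swap {μ : Fin n → ℤ} {k l : Fin n} (hkl : k ≠ l)
    (hμ : μ ∘ Equiv.swap k l = μ) : Atilde n μ = -Atilde n μ := by
  have hfix (σ : Equiv.Perm (Fin n)) :
      (fun i => μ ((σ * Equiv.swap k l)⁻¹ i)) = fun i => μ (σ⁻¹ i) := by
    funext i
    simpa [Equiv.swap_inv] using congrFun hμ (σ⁻¹ i)
  conv_lhs => rw [Atilde, ← Equiv.sum_comp (Equiv.mulRight (Equiv.swap k l))]
  simp only [Atilde, ← sum_neg_distrib, Equiv.coe_mulRight, hfix, Equiv.Perm.sign_mul,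
    Equiv.Perm.sign_swap hkl, mul_neg, mul_one, Units.val_neg, neg_smul]

theorem eq_zero_of_not_injective {μ : Fin n → ℤ} (hμ : ¬ Function.Injective μ) :
    Atilde n μ = 0 := by
  obtain ⟨k, l, hμkl, hkl⟩ := Function.not_injective_iff.mp hμ
  have hswap : μ ∘ Equiv.swap k l = μ := by
    rw [Equiv.comp_swap_eq_update, hμkl, Function.update_eq_self, ← hμkl, Function.update_eq_self]
  have h := eq_neg_self_of_comp_swap hkl hswap
  ext ν
  have := congrArg (fun x => x.coeff ν) h
  simp only [AddMonoidAlgebra.coeff_neg, Finsupp.neg_apply] at this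
  simp only [AddMonoidAlgebra.coeff_zero, Finsupp.coe_zero, Pi.zero_apply]
  omega

theorem ne_zero_iff_injective (μ : Fin n → ℤ) : Atilde n μ ≠ 0 ↔ Function.Injective μ :=
  ⟨fun h => by_contra fun hμ => h (eq_zero_of_not_injective hμ), ne_zero_of_injective⟩

end Atilde

section

variable {n : ℕ}

theorem rhoT_add_smul_single_sub_single_apply (a : ℤ) (i j k : Fin n) :
    (rhoT n + a • (Pi.single i 1 - Pi.single j 1) : Fin n → ℤ) k =
      n - 1 - k + a * ((if k = i then 1 else 0) - if k = j then 1 else 0) := by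
  simp only [Pi.add_apply, Pi.smul_apply, Pi.sub_apply, rhoT, smul_eq_mul, Pi.single_apply]

theorem injective_rhoT_add_smul_single_sub_single_iff {a : ℕ} (ha : 1 ≤ a) {i j : Fin n}
    (hij : i < j) :
    Function.Injective (rhoT n + (a : ℤ) • (Pi.single i 1 - Pi.single j 1)) ↔
      (i : ℕ) + 1 ≤ a ∧ n - a < (j : ℕ) + 1 := by
  have hij' : (i : ℕ) < j := hij
  have hjn := j.isLt
  simp only [Function.Injective, rhoT_add_smul_single_sub_single_apply, Fin.ext_iff]
  constructor
  · intro h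
    constructor
    · by_contra hai
      have := @h ⟨i - a, by omega⟩ i
      dsimp only at this
      split_ifs at this <;> push_cast [show a ≤ (i : ℕ) by omega] at this <;> omega
    · by_contra hja
      have := @h ⟨j + a, by omega⟩ j
      dsimp only at this
      split_ifs at this <;> push_cast at this <;> omega
  · rintro ⟨hi, hj⟩ k l hkl
    have := k.isLt; have := l.isLt
    split_ifs at hkl <;> omega

end

/-- `i j : Fin n` are 0-indexed, so the paper's conditions `i ≤ a` and `j > n − a` read
`i + 1 ≤ a` and `n − a < j + 1`. -/
theorem stmt7_general (n : ℕ) (a : ℕ) (ha : 1 ≤ a) (i j : Fin n) (hij : i < j) :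
    Atilde n (rhoT n + (a : ℤ) • (Pi.single i 1 - Pi.single j 1)) ≠ 0 ↔
      ((i : ℕ) + 1 ≤ a ∧ n - a < (j : ℕ) + 1) :=
  (Atilde.ne_zero_iff_injective _).trans (injective_rhoT_add_smul_single_sub_single_iff ha hij)

/-- formula (4.4) of the paper.
For `n ≥ 2`, `a ≥ 1` and `1 ≤ i < j ≤ n` (here realized with `0`-indexed
`i j : Fin n`, so that the `1`-indexed conditions `i ≤ a` and `j > n − a` read
`(i+1) ≤ a` and `n − a < (j+1)`), the alternating sum
`E^ρ(−aα) = Ã(ρ̃ + a(e_i − e_j))` for the negative root `α = −(ε_i − ε_j)` of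
`sl_n` is nonzero exactly when `i ≤ a` and `j > n − a`. -/
theorem stmt7 (n : ℕ) (hn : 2 ≤ n) (a : ℕ) (ha : 1 ≤ a) (i j : Fin n) (hij : i < j) :
    Atilde n (rhoT n + (a : ℤ) • (Pi.single i 1 - Pi.single j 1)) ≠ 0 ↔
      ((i : ℕ) + 1 ≤ a ∧ n - a < (j : ℕ) + 1) :=
  stmt7_general n a ha i j hij
end

section
/- Let n ≥ 2. The family of group-algebra elements Ã(ρ̃ + a(e_i − e_j)), indexed by all triples (a, i, j) of integers with a ≥ 1, 1 ≤ i < j ≤ n, i ≤ a and j > n − a, is linearly independent over ℤ. (These are exactly the nonzero alternating sums E^ρ(−aα) with a ≥ 1 and α a negative root of sl_n, so the statement says that all such nonzero sums are linearly independent.) -/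
open Finset

/-! Every `ν = ρ̃ + a(e_i − e_j)` of the family has distinct entries, so `Ã(ν)` has coefficient
`1` at `ν`. No two members of the family are permutations of each other: `i` and `j` are the
positions of the two entries of `ρ̃` missing from `ν`, and then `a` is read off the largest entry.
So `Ã(ν')` has coefficient `0` at `ν` for `ν' ≠ ν`, and the coefficient functionals at the
members of the family are biorthogonal to the family. -/

theorem linearIndependent_of_biorthogonal {R M ι : Type*} [Ring R] [AddCommGroup M] [Module R M]
    [DecidableEq ι] {v : ι → M} (f : ι → M →ₗ[R] R)
    (hf : ∀ s t, f s (v t) = if s = t then 1 else 0) : LinearIndependent R v := by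
  refine LinearIndependent.of_comp (LinearMap.pi f) ?_
  have hpi : LinearMap.pi f ∘ v = fun t => Pi.single t 1 := by
    ext t s
    simp [hf, Pi.single_apply]
  rw [hpi]
  exact Pi.linearIndependent_single_one ι R

section Atilde

variable {n : ℕ}

theorem Atilde_coeff (μ p : Fin n → ℤ) :
    (Atilde n μ).coeff p =
      ∑ σ : Equiv.Perm (Fin n),
        if (fun i => μ (σ⁻¹ i)) = p then (Equiv.Perm.sign σ : ℤ) else 0 := by
  simp [Atilde, AddMonoidAlgebra.coeff_sum, Finsupp.finsetSum_apply, Finsupp.single_apply]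

theorem Atilde_coeff_self {μ : Fin n → ℤ} (hμ : Function.Injective μ) :
    (Atilde n μ).coeff μ = 1 := by
  rw [Atilde_coeff, Finset.sum_eq_single 1 _ (by simp)]
  · simp
  intro σ _ hσ
  refine if_neg fun h => hσ ?_
  rw [← inv_eq_one]
  exact Equiv.ext fun i => hμ (congrFun h i)

theorem Atilde_coeff_eq_zero {μ p : Fin n → ℤ}
    (h : ∀ σ : Equiv.Perm (Fin n), (fun i => μ (σ⁻¹ i)) ≠ p) :
    (Atilde n μ).coeff p = 0 := by
  rw [Atilde_coeff]
  exact Finset.sum_eq_zero fun σ _ => if_neg (h σ)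

theorem linearIndependent_Atilde {ι : Type*} {μ : ι → Fin n → ℤ}
    (hμ : ∀ t, Function.Injective (μ t))
    (horbit : ∀ s t (σ : Equiv.Perm (Fin n)), (fun i => μ t (σ⁻¹ i)) = μ s → s = t) :
    LinearIndependent ℤ (fun t => Atilde n (μ t)) := by
  classical
  refine linearIndependent_of_biorthogonal
    (fun s => Finsupp.lapply (μ s) ∘ₗ (AddMonoidAlgebra.coeffLinearEquiv ℤ).toLinearMap)
    fun s t => ?_
  change (Atilde n (μ t)).coeff (μ s) = _
  split_ifs with hst
  · exact hst ▸ Atilde_coeff_self (hμ s)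
  · exact Atilde_coeff_eq_zero fun σ h => hst (horbit s t σ h)

end Atilde

section ShiftedRho

variable {n : ℕ}

theorem rhoT_nonneg (k : Fin n) : 0 ≤ rhoT n k := by
  have := k.isLt
  simp only [rhoT]
  omega

theorem rhoT_lt (k : Fin n) : rhoT n k < n := by
  simp only [rhoT]
  omega

theorem rhoT_injective : Function.Injective (rhoT n) := fun k m h =>
  Fin.ext (by simp only [rhoT] at h; omega)

def shiftedRho (n a : ℕ) (i j : Fin n) : Fin n → ℤ :=
  rhoT n + (a : ℤ) • (Pi.single i 1 - Pi.single j 1)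

variable {a : ℕ} {i j k : Fin n}

theorem shiftedRho_apply_left (hij : i ≠ j) : shiftedRho n a i j i = rhoT n i + a := by
  simp [shiftedRho, hij]

theorem shiftedRho_apply_right (hij : i ≠ j) : shiftedRho n a i j j = rhoT n j - a := by
  simp [shiftedRho, hij.symm, sub_eq_add_neg]

theorem shiftedRho_apply_of_ne (hi : k ≠ i) (hj : k ≠ j) : shiftedRho n a i j k = rhoT n k := by
  simp [shiftedRho, hi, hj]

/- The paper's conditions `i ≤ a`, `j > n − a` (`1`-indexed): the raised entry of
`ρ̃ + a(e_i − e_j)` exceeds every entry of `ρ̃`, the lowered one falls below all of them. -/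
structure Admissible (n a : ℕ) (i j : Fin n) : Prop where
  lt : i < j
  le_rhoT_add : (n : ℤ) ≤ rhoT n i + a
  rhoT_sub_neg : rhoT n j - a < 0

namespace Admissible

theorem of_lt (hij : i < j) (hi : (i : ℕ) + 1 ≤ a) (hj : n - a < (j : ℕ) + 1) :
    Admissible n a i j :=
  ⟨hij, by simp only [rhoT]; omega, by simp only [rhoT]; omega⟩

theorem le_shiftedRho_iff (h : Admissible n a i j) : (n : ℤ) ≤ shiftedRho n a i j k ↔ k = i := by
  refine ⟨fun hk => ?_, ?_⟩
  · by_contra hki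
    by_cases hkj : k = j
    · rw [hkj, shiftedRho_apply_right h.lt.ne] at hk
      linarith [h.rhoT_sub_neg]
    · rw [shiftedRho_apply_of_ne hki hkj] at hk
      linarith [rhoT_lt k]
  · rintro rfl
    rw [shiftedRho_apply_left h.lt.ne]
    exact h.le_rhoT_add

theorem shiftedRho_neg_iff (h : Admissible n a i j) : shiftedRho n a i j k < 0 ↔ k = j := by
  refine ⟨fun hk => ?_, ?_⟩
  · by_contra hkj
    by_cases hki : k = i
    · rw [hki, shiftedRho_apply_left h.lt.ne] at hk
      linarith [h.le_rhoT_add]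
    · rw [shiftedRho_apply_of_ne hki hkj] at hk
      linarith [rhoT_nonneg k]
  · rintro rfl
    rw [shiftedRho_apply_right h.lt.ne]
    exact h.rhoT_sub_neg

theorem shiftedRho_injective (h : Admissible n a i j) :
    Function.Injective (shiftedRho n a i j) := by
  intro k m hkm
  have hi : k = i ↔ m = i := by rw [← h.le_shiftedRho_iff, ← h.le_shiftedRho_iff, hkm]
  have hj : k = j ↔ m = j := by rw [← h.shiftedRho_neg_iff, ← h.shiftedRho_neg_iff, hkm]
  by_cases hki : k = i
  · exact hki.trans (hi.1 hki).symm
  by_cases hkj : k = j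
  · exact hkj.trans (hj.1 hkj).symm
  rw [shiftedRho_apply_of_ne hki hkj, shiftedRho_apply_of_ne (hi.not.1 hki) (hj.not.1 hkj)] at hkm
  exact rhoT_injective hkm

theorem exists_shiftedRho_eq_rhoT_iff (h : Admissible n a i j) (m : Fin n) :
    (∃ k, shiftedRho n a i j k = rhoT n m) ↔ m ≠ i ∧ m ≠ j := by
  refine ⟨fun ⟨k, hk⟩ => ?_, fun ⟨hi, hj⟩ => ⟨m, shiftedRho_apply_of_ne hi hj⟩⟩
  have hki : k ≠ i := fun hki => by
    have := h.le_shiftedRho_iff.2 hki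
    linarith [rhoT_lt m]
  have hkj : k ≠ j := fun hkj => by
    have := h.shiftedRho_neg_iff.2 hkj
    linarith [rhoT_nonneg m]
  rw [shiftedRho_apply_of_ne hki hkj] at hk
  obtain rfl := rhoT_injective hk
  exact ⟨hki, hkj⟩

theorem eq_of_shiftedRho_comp_perm {a' : ℕ} {i' j' : Fin n} (h : Admissible n a i j)
    (h' : Admissible n a' i' j') (σ : Equiv.Perm (Fin n))
    (hσ : ∀ k, shiftedRho n a' i' j' (σ k) = shiftedRho n a i j k) :
    a = a' ∧ i = i' ∧ j = j' := by
  have hpair : ({i, j} : Set (Fin n)) = {i', j'} := by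
    ext m
    have hmissing : (∃ k, shiftedRho n a i j k = rhoT n m) ↔
        ∃ k, shiftedRho n a' i' j' k = rhoT n m := by
      simp only [← hσ]
      exact (σ.surjective.exists (p := fun k => shiftedRho n a' i' j' k = rhoT n m)).symm
    rw [h.exists_shiftedRho_eq_rhoT_iff, h'.exists_shiftedRho_eq_rhoT_iff] at hmissing
    simpa only [Set.mem_insert_iff, Set.mem_singleton_iff, ne_eq, ← not_or, not_iff_not]
      using hmissing
  obtain ⟨rfl, rfl⟩ | ⟨rfl, rfl⟩ := Set.pair_eq_pair_iff.1 hpair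
  · have hσi : σ i = i := h'.le_shiftedRho_iff.1 (hσ i ▸ h.le_shiftedRho_iff.2 rfl)
    have hai := hσ i
    rw [hσi, shiftedRho_apply_left h.lt.ne, shiftedRho_apply_left h.lt.ne] at hai
    exact ⟨by omega, rfl, rfl⟩
  · exact absurd (h.lt.trans h'.lt) (lt_irrefl i)

end Admissible

end ShiftedRho

theorem stmt8_general (n : ℕ) :
    LinearIndependent ℤ
      (fun t : {x : ℕ × Fin n × Fin n //
          1 ≤ x.1 ∧ x.2.1 < x.2.2 ∧ (x.2.1 : ℕ) + 1 ≤ x.1 ∧ n - x.1 < (x.2.2 : ℕ) + 1} =>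
        Atilde n (rhoT n + ((t : ℕ × Fin n × Fin n).1 : ℤ) •
          (Pi.single (t : ℕ × Fin n × Fin n).2.1 (1 : ℤ) -
            Pi.single (t : ℕ × Fin n × Fin n).2.2 (1 : ℤ)))) := by
  set ι := {x : ℕ × Fin n × Fin n //
    1 ≤ x.1 ∧ x.2.1 < x.2.2 ∧ (x.2.1 : ℕ) + 1 ≤ x.1 ∧ n - x.1 < (x.2.2 : ℕ) + 1}
  have hadm (t : ι) : Admissible n t.1.1 t.1.2.1 t.1.2.2 :=
    .of_lt t.2.2.1 t.2.2.2.1 t.2.2.2.2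
  change LinearIndependent ℤ fun t : ι => Atilde n (shiftedRho n t.1.1 t.1.2.1 t.1.2.2)
  refine linearIndependent_Atilde (fun t => (hadm t).shiftedRho_injective) fun s t σ hst => ?_
  obtain ⟨ha, hi, hj⟩ := (hadm s).eq_of_shiftedRho_comp_perm (hadm t) σ⁻¹ (congrFun hst)
  exact Subtype.ext (Prod.ext ha (Prod.ext hi hj))

/-- Lemma 4.3 of the paper.
For `n ≥ 2`, the family of elements `Ã(ρ̃ + a(e_i − e_j))`, indexed by the
triples `(a, i, j)` with `a ≥ 1`, `i < j`, `i ≤ a`, `j > n − a` (`1`-indexed;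
these are exactly the nonzero `E^ρ(−aα)` with `α` a negative root of `sl_n`),
is linearly independent over `ℤ`. -/
theorem stmt8 (n : ℕ) (hn : 2 ≤ n) :
    LinearIndependent ℤ
      (fun t : {x : ℕ × Fin n × Fin n //
          1 ≤ x.1 ∧ x.2.1 < x.2.2 ∧ (x.2.1 : ℕ) + 1 ≤ x.1 ∧ n - x.1 < (x.2.2 : ℕ) + 1} =>
        Atilde n (rhoT n + ((t : ℕ × Fin n × Fin n).1 : ℤ) •
          (Pi.single (t : ℕ × Fin n × Fin n).2.1 (1 : ℤ) -
            Pi.single (t : ℕ × Fin n × Fin n).2.2 (1 : ℤ)))) :=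
  stmt8_general n
end

section
/- Let n ≥ 2. For all integers a, b ≥ 1 one has Ã_{a,b} = −Ã_{b,a} in the group algebra. (This is the type-A instance of the identity E_{a,b} = −E_{b,a} for a simply-laced root system.) -/
open Finset

/-- `Ã_{a,b} = Σ Ã(ρ̃ − a(e_u − e_v))` over ordered pairs `u ≠ v` with
`v − u = a − b` (the roots of `sl_n` of height `a − b`). -/
noncomputable def AtildeAB (n : ℕ) (a b : ℕ) : AddMonoidAlgebra ℤ (Fin n → ℤ) :=
  ∑ uv : Fin n × Fin n,
    if uv.1 ≠ uv.2 ∧ ((uv.2 : ℤ) - (uv.1 : ℤ) = (a : ℤ) - (b : ℤ)) then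
      Atilde n (rhoT n - (a : ℤ) • (Pi.single uv.1 1 - Pi.single uv.2 1))
    else 0


/-!
The transposition `(u v)` fixes the staircase up to the root `e_u - e_v`:
`ρ̃ ∘ (u v) = ρ̃ - (v - u)(e_u - e_v)`. Hence when `v - u = a - b` it carries
`ρ̃ - b(e_v - e_u)` to `ρ̃ - a(e_u - e_v)`, and since `Ã` is alternating the two
summands indexed by `(u, v)` in `Ã_{a,b}` and by `(v, u)` in `Ã_{b,a}` cancel.
-/

lemma Atilde_comp_perm (n : ℕ) (μ : Fin n → ℤ) (τ : Equiv.Perm (Fin n)) :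
    Atilde n (fun i => μ (τ i)) = (Equiv.Perm.sign τ : ℤ) • Atilde n μ := by
  unfold Atilde
  rw [Finset.smul_sum]
  refine Fintype.sum_equiv (Equiv.mulRight τ⁻¹) _ _ fun σ => ?_
  have hσ : (fun i => μ (τ (σ⁻¹ i))) = fun i => μ ((σ * τ⁻¹)⁻¹ i) := by
    funext i; simp [mul_inv_rev]
  have hsign : Equiv.Perm.sign τ * Equiv.Perm.sign (σ * τ⁻¹) = Equiv.Perm.sign σ := by
    rw [Equiv.Perm.sign_mul, Equiv.Perm.sign_inv, mul_left_comm, Int.units_mul_self, mul_one]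
  rw [Equiv.coe_mulRight, hσ, smul_smul, ← Units.val_mul, hsign]

lemma Pi.single_comp_swap {α M : Type*} [DecidableEq α] [Zero M] (u v : α) (m : M) :
    (fun i => (Pi.single v m : α → M) (Equiv.swap u v i)) = Pi.single u m := by
  funext i
  simp only [Pi.single_apply, Equiv.swap_apply_eq_iff, Equiv.swap_apply_right]

lemma rhoT_comp_swap (n : ℕ) (u v : Fin n) :
    (fun i => rhoT n (Equiv.swap u v i))
      = rhoT n - ((v : ℤ) - u) • (Pi.single u 1 - Pi.single v 1) := by
  funext i
  simp only [rhoT, Pi.sub_apply, Pi.smul_apply, smul_eq_mul, Equiv.swap_apply_def,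
    Pi.single_apply]
  split_ifs <;> subst_vars <;> simp_all

lemma Atilde_rhoT_sub_root_eq_neg {n : ℕ} {a b : ℕ} {u v : Fin n} (huv : u ≠ v)
    (hab : (v : ℤ) - u = a - b) :
    Atilde n (rhoT n - (a : ℤ) • (Pi.single u 1 - Pi.single v 1))
      = -Atilde n (rhoT n - (b : ℤ) • (Pi.single v 1 - Pi.single u 1)) := by
  have hswap : (fun i => (rhoT n - (b : ℤ) • (Pi.single v 1 - Pi.single u 1) : Fin n → ℤ)
      (Equiv.swap u v i)) = rhoT n - (a : ℤ) • (Pi.single u 1 - Pi.single v 1) := by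
    have hv := Pi.single_comp_swap v u (1 : ℤ)
    rw [Equiv.swap_comm] at hv
    funext i
    have hρ := congr_fun (rhoT_comp_swap n u v) i
    simp only [Pi.sub_apply, Pi.smul_apply, smul_eq_mul] at hρ ⊢
    rw [hρ, congr_fun (Pi.single_comp_swap u v (1 : ℤ)) i, congr_fun hv i]
    linear_combination ((Pi.single v 1 : Fin n → ℤ) i - (Pi.single u 1 : Fin n → ℤ) i) * hab
  rw [← hswap, Atilde_comp_perm, Equiv.Perm.sign_swap huv]
  simp

theorem stmt9_general (n : ℕ) (a b : ℕ) :
    AtildeAB n a b = - AtildeAB n b a := by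
  unfold AtildeAB
  rw [← Finset.sum_neg_distrib]
  refine Fintype.sum_equiv (Equiv.prodComm (Fin n) (Fin n)) _ _ fun ⟨u, v⟩ => ?_
  simp only [Equiv.prodComm_apply, Prod.fst_swap, Prod.snd_swap, ne_comm (a := v)]
  by_cases h : u ≠ v ∧ (v : ℤ) - u = a - b
  · rw [if_pos h, if_pos ⟨h.1, by linarith [h.2]⟩]
    exact Atilde_rhoT_sub_root_eq_neg h.1 h.2
  · rw [if_neg h, if_neg fun h' => h ⟨h'.1, by linarith [h'.2]⟩, neg_zero]

/-- Lemma 3.5 of the paper, type `A`.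
For `n ≥ 2` and integers `a, b ≥ 1`, `Ã_{a,b} = −Ã_{b,a}` in the group
algebra. -/
theorem stmt9 (n : ℕ) (hn : 2 ≤ n) (a b : ℕ) (ha : 1 ≤ a) (hb : 1 ≤ b) :
    AtildeAB n a b = - AtildeAB n b a :=
  stmt9_general n a b
end

section
/- Let n ≥ 2 and 2 ≤ p < n be integers. Then M_{p,D} = 0 in the group algebra for every positive integer D in each of the following situations: (i) p = 2, n even, and D < n/2; (ii) p = 2, n odd, and D < n; (iii) (n,p) = (5,3) and D ≤ 3; (iv) (n,p) = (8,3) and D ≤ 5; (v) (n,p) = (7,4) and D ≤ 3; (vi) p ≥ 3, (n,p) ∉ {(5,3),(8,3),(7,4)}, and D < min{D(s₁), D(s₂)}, where s₁ = ⌊n/p⌋, s₂ = ⌈n/p⌉ and D(s) = (|s·p − n| + 1)·s. -/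
open Finset

/-- `M_{p,D} = Σ Ã_{a,b}` over pairs `(a,b)` of positive integers with
`a·b = p·D` and `p ∣ b` (all such pairs lie in `[1, p·D]²`). -/
noncomputable def Mpd (n p D : ℕ) : AddMonoidAlgebra ℤ (Fin n → ℤ) :=
  ∑ ab ∈ (Finset.Icc 1 (p * D) ×ˢ Finset.Icc 1 (p * D)).filter
      (fun ab => ab.1 * ab.2 = p * D ∧ p ∣ ab.2),
    AtildeAB n ab.1 ab.2


/-- `D(s) = (|s·p − n| + 1)·s`. -/
def DA (n p s : ℕ) : ℕ := (((s : ℤ) * p - n).natAbs + 1) * s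

/-!
`Ã` is alternating, so `Ã(μ)` vanishes as soon as `μ` has two equal entries. Composing
`ρ̃ − a(e_u − e_v)` with the transposition `(u v)` gives `ρ̃ − b(e_v − e_u)` when `v − u = a − b`,
so `Ã_{b,a} = −Ã_{a,b}` and the terms of `M_{p,D}` with `p ∣ a` cancel in pairs `(a,b) ↔ (b,a)`.
For the others write `b = pt`, `D = at`. If `a + b ≤ n`, the entry `ρ̃_u − a = ρ̃_{u+a}` or
`ρ̃_v + a = ρ̃_{v−a}` repeats an unshifted entry; if `|a − b| ≥ n` there is no root of height
`a − b`. Otherwise `a > |pt − n|`, i.e. `D ≥ D(t)`, and `D(t)` is minimised over `t ≥ 1` at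
`⌊n/p⌋` or `⌈n/p⌉`. For `p = 2` and the three exceptional pairs `(n,p)` a parity argument and a
finite check replace this bound.
-/

section Alternant

variable {n : ℕ}

theorem Atilde_comp_swap (μ : Fin n → ℤ) {i j : Fin n} (hij : i ≠ j) :
    Atilde n (μ ∘ Equiv.swap i j) = -Atilde n μ := by
  rw [Atilde, Atilde, ← sum_neg_distrib]
  refine Fintype.sum_equiv (Equiv.mulRight (Equiv.swap i j)) _ _ fun σ => ?_
  simp [Equiv.Perm.sign_mul, Equiv.Perm.sign_swap hij]

theorem Atilde_eq_zero_of_apply_eq (μ : Fin n → ℤ) {i j : Fin n} (hij : i ≠ j)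
    (hμ : μ i = μ j) : Atilde n μ = 0 := by
  have hswap : μ ∘ Equiv.swap i j = μ := by
    simp [Equiv.comp_swap_eq_update, hμ]
  have h := congrArg AddMonoidAlgebra.coeff (Atilde_comp_swap μ hij)
  rwa [hswap, AddMonoidAlgebra.coeff_neg, self_eq_neg, AddMonoidAlgebra.coeff_eq_zero] at h

end Alternant

section ShiftedStaircase

variable {n : ℕ} {u v k : Fin n} (c : ℤ)

theorem rhoT_sub_smul_apply_left (huv : u ≠ v) :
    (rhoT n - c • (Pi.single u 1 - Pi.single v 1) : Fin n → ℤ) u = rhoT n u - c := by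
  simp [huv]

theorem rhoT_sub_smul_apply_right (huv : u ≠ v) :
    (rhoT n - c • (Pi.single u 1 - Pi.single v 1) : Fin n → ℤ) v = rhoT n v + c := by
  simp [huv.symm]

theorem rhoT_sub_smul_apply_of_ne (hku : k ≠ u) (hkv : k ≠ v) :
    (rhoT n - c • (Pi.single u 1 - Pi.single v 1) : Fin n → ℤ) k = rhoT n k := by
  simp [hku, hkv]

theorem rhoT_sub_smul_comp_swap (huv : u ≠ v) {a b : ℤ} (h : (v : ℤ) - u = a - b) :
    (rhoT n - a • (Pi.single u 1 - Pi.single v 1)) ∘ Equiv.swap u v =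
      rhoT n - b • (Pi.single v 1 - Pi.single u 1) := by
  funext k
  rcases eq_or_ne k u with rfl | hku
  · simp only [Function.comp_apply, Equiv.swap_apply_left, rhoT_sub_smul_apply_right _ huv,
      rhoT_sub_smul_apply_right _ huv.symm, rhoT]
    linarith
  rcases eq_or_ne k v with rfl | hkv
  · simp only [Function.comp_apply, Equiv.swap_apply_right, rhoT_sub_smul_apply_left _ huv,
      rhoT_sub_smul_apply_left _ huv.symm, rhoT]
    linarith
  · simp only [Function.comp_apply, Equiv.swap_apply_of_ne_of_ne hku hkv,
      rhoT_sub_smul_apply_of_ne _ hku hkv, rhoT_sub_smul_apply_of_ne _ hkv hku]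

end ShiftedStaircase

section AtildeAB

variable {n : ℕ}

theorem AtildeAB_swap (a b : ℕ) : AtildeAB n b a = -AtildeAB n a b := by
  rw [AtildeAB, AtildeAB, Fintype.sum_prod_type, Fintype.sum_prod_type, sum_comm,
    ← sum_neg_distrib]
  refine sum_congr rfl fun v _ => ?_
  rw [← sum_neg_distrib]
  refine sum_congr rfl fun u _ => ?_
  dsimp only
  split_ifs with h₁ h₂ h₂
  · rw [← rhoT_sub_smul_comp_swap (a := a) (b := b) h₂.1 (by omega), Atilde_comp_swap _ h₂.1]
  · exact absurd ⟨h₁.1.symm, by omega⟩ h₂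
  · exact absurd ⟨h₂.1.symm, by omega⟩ h₁
  · rw [neg_zero]

theorem AtildeAB_self (a : ℕ) : AtildeAB n a a = 0 :=
  sum_eq_zero fun uv _ => if_neg fun ⟨huv, h⟩ => huv (Fin.ext (by omega))

theorem AtildeAB_eq_zero_of_add_le {a b : ℕ} (ha : 1 ≤ a) (hb : 1 ≤ b) (hab : a + b ≤ n) :
    AtildeAB n a b = 0 := by
  refine sum_eq_zero fun ⟨u, v⟩ _ => ite_eq_right_iff.mpr fun (⟨huv, h⟩ : u ≠ v ∧ _) => ?_
  dsimp only at h ⊢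
  by_cases hu : (u : ℕ) + a < n
  · let k : Fin n := ⟨u + a, hu⟩
    have hku : k ≠ u := by simp [k, Fin.ext_iff]; omega
    have hkv : k ≠ v := by simp [k, Fin.ext_iff]; omega
    refine Atilde_eq_zero_of_apply_eq _ hku.symm ?_
    rw [rhoT_sub_smul_apply_left _ huv, rhoT_sub_smul_apply_of_ne _ hku hkv]
    simp [rhoT, k]
    ring
  · let k : Fin n := ⟨v - a, by omega⟩
    have hku : k ≠ u := by simp [k, Fin.ext_iff]; omega
    have hkv : k ≠ v := by simp [k, Fin.ext_iff]; omega
    refine Atilde_eq_zero_of_apply_eq _ hkv.symm ?_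
    rw [rhoT_sub_smul_apply_right _ huv, rhoT_sub_smul_apply_of_ne _ hku hkv]
    simp [rhoT, k]
    omega

theorem AtildeAB_eq_zero_of_le_sub {a b : ℕ} (h : n ≤ a - b ∨ n ≤ b - a) :
    AtildeAB n a b = 0 :=
  sum_eq_zero fun ⟨u, v⟩ _ => if_neg fun ⟨_, _⟩ => by omega

end AtildeAB

theorem sum_AtildeAB_eq_zero_of_swap_mem {n : ℕ} (s : Finset (ℕ × ℕ))
    (hs : ∀ x ∈ s, x.swap ∈ s) : ∑ x ∈ s, AtildeAB n x.1 x.2 = 0 :=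
  sum_involution (fun x _ => x.swap)
    (fun x _ => by rw [Prod.fst_swap, Prod.snd_swap, AtildeAB_swap, neg_add_cancel])
    (fun x _ hx h => hx (by rw [show x.1 = x.2 from congrArg Prod.snd h, AtildeAB_self]))
    hs (fun x _ => x.swap_swap)

theorem Mpd_eq_zero_of_forall {n p D : ℕ}
    (H : ∀ a t, 1 ≤ a → 1 ≤ t → ¬p ∣ a → a * t = D →
      n < a + p * t → p * t < a + n → a < p * t + n → False) :
    Mpd n p D = 0 := by
  classical
  rw [Mpd, ← sum_filter_add_sum_filter_not _ fun x => p ∣ x.1,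
    sum_AtildeAB_eq_zero_of_swap_mem _ ?_, zero_add]
  · refine sum_eq_zero fun ⟨a, b⟩ hab => ?_
    simp only [mem_filter, mem_product, mem_Icc] at hab
    obtain ⟨⟨⟨⟨ha, -⟩, hb, -⟩, hab, t, rfl⟩, hpa⟩ := hab
    have hp : p ≠ 0 := by rintro rfl; omega
    have hat : a * t = D := mul_left_cancel₀ hp (by rw [← hab]; ring)
    have ht : 1 ≤ t := Nat.pos_of_ne_zero (by rintro rfl; omega)
    by_cases hnear : a + p * t ≤ n
    · exact AtildeAB_eq_zero_of_add_le ha hb hnear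
    by_cases hfar : n ≤ a - p * t ∨ n ≤ p * t - a
    · exact AtildeAB_eq_zero_of_le_sub hfar
    exact (H a t ha ht hpa hat (by omega) (by omega) (by omega)).elim
  · simp only [mem_filter, mem_product, mem_Icc, Prod.fst_swap, Prod.snd_swap]
    rintro ⟨a, b⟩ ⟨⟨⟨ha, hb⟩, hab, hpb⟩, hpa⟩
    exact ⟨⟨⟨hb, ha⟩, by rw [mul_comm, hab], hpa⟩, hpb⟩

section Arithmetic

variable {n p a s t : ℕ}

theorem DA_eq_of_mul_le (h : s * p ≤ n) : DA n p s = (n - s * p + 1) * s := by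
  unfold DA; congr 2; omega

theorem DA_eq_of_le_mul (h : n ≤ s * p) : DA n p s = (s * p - n + 1) * s := by
  unfold DA; congr 2; omega

theorem DA_le_of_le_mul (hs : n ≤ s * p) (hst : s ≤ t) : DA n p s ≤ DA n p t := by
  have hp : s * p ≤ t * p := Nat.mul_le_mul_right p hst
  rw [DA_eq_of_le_mul hs, DA_eq_of_le_mul (hs.trans hp)]
  exact Nat.mul_le_mul (by omega) hst

theorem DA_div_le (hp : 0 < p) (ht : 1 ≤ t) (hts : t ≤ n / p) : DA n p (n / p) ≤ DA n p t := by
  set s := n / p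
  have hs : s * p ≤ n := Nat.div_mul_le_self n p
  have hs' : n < s * p + p := Nat.lt_div_mul_add hp
  have hst : t * p ≤ s * p := Nat.mul_le_mul_right p hts
  have hpt : p ≤ t * p := Nat.le_mul_of_pos_left p ht
  rw [DA_eq_of_mul_le hs, DA_eq_of_mul_le (hst.trans hs)]
  -- `D(t) − D(s) = (s − t)(p(s + t) − n − 1)`
  zify [hs, hst.trans hs] at *
  nlinarith [mul_nonneg (sub_nonneg.mpr hts) (by linarith : (0 : ℤ) ≤ s * p + t * p - n - 1)]

theorem DA_ceil_le (hp : 0 < p) (hts : n / p < t) :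
    DA n p ((n + p - 1) / p) ≤ DA n p t := by
  have hn : n < t * p := (Nat.div_lt_iff_lt_mul hp).mp hts
  refine DA_le_of_le_mul ?_ ?_
  · have := Nat.lt_div_mul_add (a := n + p - 1) hp
    omega
  · exact Nat.le_of_lt_succ ((Nat.div_lt_iff_lt_mul hp).mpr (by rw [Nat.succ_mul]; omega))

theorem min_DA_le (hp : 0 < p) (ht : 1 ≤ t) :
    min (DA n p (n / p)) (DA n p ((n + p - 1) / p)) ≤ DA n p t := by
  rcases le_or_gt t (n / p) with hts | hts
  · exact min_le_of_left_le (DA_div_le hp ht hts)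
  · exact min_le_of_right_le (DA_ceil_le hp hts)

theorem DA_le_mul_of_lt (h₁ : n < a + p * t) (h₂ : p * t < a + n) : DA n p t ≤ a * t := by
  unfold DA
  gcongr
  rw [mul_comm] at h₁ h₂
  omega

theorem div_two_le_mul (ha : 1 ≤ a) (ht : 1 ≤ t) (h : n < a + 2 * t) : n / 2 ≤ a * t := by
  refine Nat.div_le_of_le_mul ?_
  nlinarith

theorem le_mul_of_odd (hn : Odd n) (ha : ¬2 ∣ a) (h₁ : n < a + 2 * t) (h₂ : 2 * t < a + n)
    (h₃ : a < 2 * t + n) : n ≤ a * t := by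
  obtain ⟨m, rfl⟩ := hn
  have hsum : 2 * m + 3 ≤ a + 2 * t := by omega
  have hdiff₁ : (a : ℤ) - 2 * t ≤ 2 * m - 1 := by omega
  have hdiff₂ : 2 * t - (a : ℤ) ≤ 2 * m - 1 := by omega
  zify at hsum ⊢
  nlinarith

theorem false_of_exceptional
    (h : (n = 5 ∧ p = 3 ∧ a * t ≤ 3) ∨ (n = 8 ∧ p = 3 ∧ a * t ≤ 5) ∨ (n = 7 ∧ p = 4 ∧ a * t ≤ 3))
    (ha : 1 ≤ a) (ht : 1 ≤ t) (hpa : ¬p ∣ a) (h₁ : n < a + p * t) (h₂ : p * t < a + n) :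
    False := by
  have ha' : a ≤ a * t := Nat.le_mul_of_pos_right a ht
  have ht' : t ≤ a * t := Nat.le_mul_of_pos_left t ha
  have ha5 : a ≤ 5 := by omega
  have ht5 : t ≤ 5 := by omega
  rcases h with ⟨rfl, rfl, hD⟩ | ⟨rfl, rfl, hD⟩ | ⟨rfl, rfl, hD⟩ <;>
    interval_cases a <;> interval_cases t <;> omega

end Arithmetic

theorem stmt12_general (n p D : ℕ)
    (h : (p = 2 ∧ Even n ∧ D < n / 2) ∨
         (p = 2 ∧ Odd n ∧ D < n) ∨
         (n = 5 ∧ p = 3 ∧ D ≤ 3) ∨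
         (n = 8 ∧ p = 3 ∧ D ≤ 5) ∨
         (n = 7 ∧ p = 4 ∧ D ≤ 3) ∨
         (3 ≤ p ∧ ¬(n = 5 ∧ p = 3) ∧ ¬(n = 8 ∧ p = 3) ∧ ¬(n = 7 ∧ p = 4) ∧
           D < min (DA n p (n / p)) (DA n p ((n + p - 1) / p)))) :
    Mpd n p D = 0 := by
  refine Mpd_eq_zero_of_forall fun a t ha ht hpa hD h₁ h₂ h₃ => ?_
  subst hD
  rcases h with ⟨rfl, -, hlt⟩ | ⟨rfl, hn, hlt⟩ | h | h | h | ⟨hp, -, -, -, hlt⟩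
  · exact hlt.not_ge (div_two_le_mul ha ht h₁)
  · exact hlt.not_ge (le_mul_of_odd hn hpa h₁ h₂ h₃)
  · exact false_of_exceptional (.inl h) ha ht hpa h₁ h₂
  · exact false_of_exceptional (.inr (.inl h)) ha ht hpa h₁ h₂
  · exact false_of_exceptional (.inr (.inr h)) ha ht hpa h₁ h₂
  · exact hlt.not_ge ((min_DA_le (by omega) ht).trans (DA_le_mul_of_lt h₁ h₂))

/-- Lemma 4.7 of the paper.
Let `n ≥ 2` and `2 ≤ p < n`. Then `M_{p,D} = 0` in each of the situations:
(i) `p = 2`, `n` even, `D < n/2`; (ii) `p = 2`, `n` odd, `D < n`;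
(iii) `(n,p) = (5,3)`, `D ≤ 3`; (iv) `(n,p) = (8,3)`, `D ≤ 5`;
(v) `(n,p) = (7,4)`, `D ≤ 3`; (vi) `p ≥ 3`, `(n,p) ∉ {(5,3),(8,3),(7,4)}`, and
`D < min {D(s₁), D(s₂)}` where `s₁ = ⌊n/p⌋`, `s₂ = ⌈n/p⌉`,
`D(s) = (|s·p − n| + 1)·s`. -/
theorem stmt12 (n p D : ℕ) (hn : 2 ≤ n) (hp : 2 ≤ p) (hpn : p < n) (hD : 1 ≤ D)
    (h : (p = 2 ∧ Even n ∧ D < n / 2) ∨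
         (p = 2 ∧ Odd n ∧ D < n) ∨
         (n = 5 ∧ p = 3 ∧ D ≤ 3) ∨
         (n = 8 ∧ p = 3 ∧ D ≤ 5) ∨
         (n = 7 ∧ p = 4 ∧ D ≤ 3) ∨
         (3 ≤ p ∧ ¬(n = 5 ∧ p = 3) ∧ ¬(n = 8 ∧ p = 3) ∧ ¬(n = 7 ∧ p = 4) ∧
           D < min (DA n p (n / p)) (DA n p ((n + p - 1) / p)))) :
    Mpd n p D = 0 :=
  stmt12_general n p D h
end

section
/- Let n, p be integers with 3 ≤ p < n and (n, p) ∉ {(5,3), (7,4), (8,3)}. Set s₁ = ⌊n/p⌋, s₂ = ⌈n/p⌉, D(s) = (|s·p − n| + 1)·s, and D = min{D(s₁), D(s₂)}. Then {(a,b) ∈ ℤ≥1 × ℤ≥1 : a·b = p·D, p | b, p ∤ a, 0 < |a − b| < n, a + b > n} = {(|n − p·s_i| + 1, p·s_i) : i ∈ {1,2} with D(s_i) = D}. In particular this intersection Q_{p,D} ∩ S is nonempty, and it has two elements exactly when p ∤ n and D(s₁) = D(s₂). -/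
set_option maxHeartbeats 4000000
lemma DA_cast (n p s : ℕ) : (DA n p s : ℤ) = (|(s:ℤ) * p - n| + 1) * s := by
  unfold DA; push_cast [Int.natCast_natAbs]; ring

/-- part of the proof of Main Theorem 1, case (6).
Let `3 ≤ p < n` with `(n,p) ∉ {(5,3), (7,4), (8,3)}`, `s₁ = ⌊n/p⌋`,
`s₂ = ⌈n/p⌉`, `D(s) = (|s·p − n| + 1)·s`, `D = min {D(s₁), D(s₂)}`. Then
`Q_{p,D} ∩ S = {(|n − p·s_i| + 1, p·s_i) : i ∈ {1,2}, D(s_i) = D}`; in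
particular this set is nonempty, and it has two elements exactly when `p ∤ n`
and `D(s₁) = D(s₂)`. -/
theorem stmt13 (n p : ℕ) (hp : 3 ≤ p) (hpn : p < n)
    (hex1 : ¬(n = 5 ∧ p = 3)) (hex2 : ¬(n = 7 ∧ p = 4)) (hex3 : ¬(n = 8 ∧ p = 3))
    (s₁ s₂ D : ℕ) (hs₁ : s₁ = n / p) (hs₂ : s₂ = (n + p - 1) / p)
    (hD : D = min (DA n p s₁) (DA n p s₂))
    (QS : Set (ℕ × ℕ))
    (hQS : QS = {ab : ℕ × ℕ | 1 ≤ ab.1 ∧ 1 ≤ ab.2 ∧ ab.1 * ab.2 = p * D ∧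
      p ∣ ab.2 ∧ ¬ p ∣ ab.1 ∧
      0 < |(ab.1 : ℤ) - (ab.2 : ℤ)| ∧ |(ab.1 : ℤ) - (ab.2 : ℤ)| < (n : ℤ) ∧
      n < ab.1 + ab.2}) :
    (QS = {ab : ℕ × ℕ |
        (DA n p s₁ = D ∧ ab = (((n : ℤ) - p * s₁).natAbs + 1, p * s₁)) ∨
        (DA n p s₂ = D ∧ ab = (((n : ℤ) - p * s₂).natAbs + 1, p * s₂))}) ∧
    QS.Nonempty ∧
    (QS.ncard = 2 ↔ (¬ p ∣ n ∧ DA n p s₁ = DA n p s₂)) := by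
  subst hQS
  have hp0 : 0 < p := by omega
  obtain ⟨r, hr⟩ : ∃ r, n % p = r := ⟨_, rfl⟩
  have hrp : r < p := hr ▸ Nat.mod_lt _ hp0
  have hn : n = p * s₁ + r := by rw [hs₁, ← hr]; exact (Nat.div_add_mod n p).symm
  have hs1pos : 1 ≤ s₁ := by rw [hs₁]; exact (Nat.one_le_div_iff hp0).mpr hpn.le
  have hs2 : s₂ = if r = 0 then s₁ else s₁ + 1 := by
    rw [hs₂]
    split_ifs with h
    · have h1 : n + p - 1 = p * s₁ + (p - 1) := by omega
      rw [h1, Nat.mul_add_div hp0, Nat.div_eq_of_lt (by omega)]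
      omega
    · have hh : p * (s₁ + 1) = p * s₁ + p := by ring
      have h1 : n + p - 1 = p * (s₁ + 1) + (r - 1) := by omega
      rw [h1, Nat.mul_add_div hp0, Nat.div_eq_of_lt (by omega)]
  have hnz : (n:ℤ) = (p:ℤ) * s₁ + r := by push_cast [hn]; ring
  have habs1 : ((s₁:ℤ) * p - n).natAbs = r := by
    have h : ((s₁:ℤ) * p - n) = -(r:ℤ) := by rw [hnz]; ring
    rw [h]; simp
  have hDA1 : DA n p s₁ = (r + 1) * s₁ := by unfold DA; rw [habs1]
  have hDA2 : r ≠ 0 → DA n p s₂ = (p - r + 1) * (s₁ + 1) := by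
    intro h0
    have hs2' : s₂ = s₁ + 1 := by rw [hs2]; simp [h0]
    have h : ((s₂:ℤ) * p - n) = ((p - r : ℕ) : ℤ) := by
      rw [hs2', hnz]; push_cast [Nat.cast_sub hrp.le]; ring
    unfold DA
    rw [h, Int.natAbs_natCast, hs2']
  have hex1' : ¬(p = 3 ∧ s₁ = 1 ∧ r = 2) := by
    rintro ⟨h1, h2, h3⟩; subst h1; subst h2; omega
  have hex2' : ¬(p = 4 ∧ s₁ = 1 ∧ r = 3) := by
    rintro ⟨h1, h2, h3⟩; subst h1; subst h2; omega
  have hex3' : ¬(p = 3 ∧ s₁ = 2 ∧ r = 2) := by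
    rintro ⟨h1, h2, h3⟩; subst h1; subst h2; omega
  have hD1 : D ≤ (r + 1) * s₁ := by rw [← hDA1]; exact hD ▸ min_le_left _ _
  have hDle2 : D ≤ DA n p s₂ := hD ▸ min_le_right _ _
  have hA : 2 ≤ s₁ → (D:ℤ) < (n:ℤ) - p + 1 := by
    intro h2
    rcases Nat.lt_or_ge r (p-1) with hrc | hrc
    · have hd : (D:ℤ) ≤ ((r:ℤ)+1)*(s₁:ℤ) := by exact_mod_cast hD1
      have hr2 : (r:ℤ) ≤ (p:ℤ) - 2 := by omega
      rw [hnz]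
      nlinarith [mul_pos (show (0:ℤ) < (p:ℤ) - r - 1 by omega)
        (show (0:ℤ) < (s₁:ℤ) - 1 by omega)]
    · have hr' : r = p - 1 := by omega
      have h0 : r ≠ 0 := by omega
      have hD2 : D ≤ (p - r + 1) * (s₁ + 1) := by rw [← hDA2 h0]; exact hDle2
      have hd : (D:ℤ) ≤ 2*((s₁:ℤ)+1) := by
        have hpr : p - r + 1 = 2 := by omega
        rw [hpr] at hD2; exact_mod_cast hD2
      by_cases hp3 : p = 3
      · have hs13 : s₁ ≠ 2 := fun h => hex3' ⟨hp3, h, by omega⟩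
        have : (3:ℤ) ≤ s₁ := by omega
        subst hp3
        have hr3 : r = 2 := by omega
        rw [hnz]
        push_cast [hr3]
        linarith
      · have hp4 : (4:ℤ) ≤ p := by omega
        have hrz : (r:ℤ) = (p:ℤ) - 1 := by omega
        rw [hnz, hrz]
        nlinarith [mul_nonneg (show (0:ℤ) ≤ (p:ℤ) - 4 by omega)
          (show (0:ℤ) ≤ (s₁:ℤ) by positivity)]
  have hB : 2 ≤ s₁ → (D:ℤ) < ((n:ℤ) - ((s₁:ℤ)-1)*p + 1)*((s₁:ℤ)-1) := by
    intro h2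
    rcases Nat.lt_or_ge r (p-1) with hrc | hrc
    · have hd : (D:ℤ) ≤ ((r:ℤ)+1)*(s₁:ℤ) := by exact_mod_cast hD1
      have hr2 : (r:ℤ) ≤ (p:ℤ) - 2 := by omega
      rw [hnz]
      nlinarith [mul_nonneg (show (0:ℤ) ≤ (p:ℤ) by positivity)
        (show (0:ℤ) ≤ (s₁:ℤ) - 2 by omega)]
    · have hr' : r = p - 1 := by omega
      have h0 : r ≠ 0 := by omega
      have hD2 : D ≤ (p - r + 1) * (s₁ + 1) := by rw [← hDA2 h0]; exact hDle2
      have hd : (D:ℤ) ≤ 2*((s₁:ℤ)+1) := by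
        have hpr : p - r + 1 = 2 := by omega
        rw [hpr] at hD2; exact_mod_cast hD2
      have hrz : (r:ℤ) = (p:ℤ) - 1 := by omega
      by_cases hp3 : p = 3
      · have hs13 : s₁ ≠ 2 := fun h => hex3' ⟨hp3, h, by omega⟩
        have h3 : (3:ℤ) ≤ s₁ := by omega
        subst hp3
        rw [hnz, hrz]
        nlinarith
      · have hp4 : (4:ℤ) ≤ p := by omega
        rw [hnz, hrz]
        nlinarith [mul_nonneg (show (0:ℤ) ≤ (p:ℤ) - 4 by omega)
          (show (0:ℤ) ≤ (s₁:ℤ) - 1 by omega)]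
  have hs2p : (n:ℤ) ≤ (s₂:ℤ)*p := by
    rcases eq_or_ne r 0 with h | h
    · rw [hs2]; simp only [h, if_pos rfl]; rw [hnz]; push_cast [h]; linarith
    · rw [hs2]; simp only [if_neg h]; rw [hnz]; push_cast; nlinarith [hrp]
  have Kmain : ∀ t : ℕ, 1 ≤ t → t ≠ s₁ → t ≠ s₂ → (D:ℤ) < (DA n p t : ℤ) := by
    intro t ht h1 h2
    rcases lt_trichotomy t s₁ with hlt | he | hgt
    · have hs12 : 2 ≤ s₁ := by omega
      have htp : (t:ℤ)*p - n ≤ 0 := by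
        have : (t:ℤ)*p ≤ ((s₁:ℤ)-1)*p :=
          mul_le_mul_of_nonneg_right (by omega) (by positivity)
        nlinarith [hnz]
      rw [DA_cast, abs_of_nonpos htp]
      rcases le_or_gt ((p:ℤ)*((t:ℤ)+1)) ((n:ℤ)+1) with hc | hc
      · have := hA hs12
        nlinarith [mul_nonneg (show (0:ℤ) ≤ (t:ℤ)-1 by omega)
          (show (0:ℤ) ≤ (n:ℤ)+1-(p:ℤ)*((t:ℤ)+1) by linarith)]
      · have := hB hs12
        have hin : (0:ℤ) ≤ (p:ℤ)*((t:ℤ)+(s₁:ℤ)-1)-((n:ℤ)+1) := by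
          nlinarith [mul_nonneg (show (0:ℤ) ≤ (p:ℤ) by positivity)
            (show (0:ℤ) ≤ (s₁:ℤ)-2 by omega)]
        nlinarith [mul_nonneg (show (0:ℤ) ≤ (s₁:ℤ)-1-(t:ℤ) by omega) hin]
    · exact absurd he h1
    · have hs2le : s₂ ≤ s₁ + 1 := by rw [hs2]; split <;> omega
      have ht2 : s₂ + 1 ≤ t := by
        rcases eq_or_ne r 0 with h | h
        · have : s₂ = s₁ := by rw [hs2]; simp [h]
          omega
        · have : s₂ = s₁ + 1 := by rw [hs2]; simp [h]
          omega
      have hs2pos : 1 ≤ s₂ := by rw [hs2]; split <;> omega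
      have htp : 0 ≤ (t:ℤ)*p - n := by
        have h1 : ((s₂:ℤ)+1)*p ≤ (t:ℤ)*p :=
          mul_le_mul_of_nonneg_right (by exact_mod_cast by omega) (by positivity)
        nlinarith
      rw [DA_cast, abs_of_nonneg htp]
      have hDs2 : (D:ℤ) ≤ ((s₂:ℤ)*p - n + 1)*s₂ := by
        have := hDle2
        have hc : (DA n p s₂ : ℤ) = ((s₂:ℤ)*p - n + 1)*s₂ := by
          rw [DA_cast, abs_of_nonneg (by linarith)]
        calc (D:ℤ) ≤ (DA n p s₂ : ℤ) := by exact_mod_cast this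
          _ = _ := hc
      have hT : (s₂:ℤ) + 1 ≤ (t:ℤ) := by exact_mod_cast ht2
      nlinarith [mul_nonneg (show (0:ℤ) ≤ (t:ℤ)-(s₂:ℤ) by omega)
        (show (0:ℤ) ≤ (s₂:ℤ)*p - n by linarith),
        mul_pos (show (0:ℤ) < (p:ℤ) by positivity) (show (0:ℤ) < (t:ℤ) by omega),
        mul_nonneg (mul_nonneg (show (0:ℤ) ≤ (t:ℤ)-(s₂:ℤ)-1 by omega) (show (0:ℤ) ≤ (p:ℤ) by positivity)) (show (0:ℤ) ≤ (t:ℤ) by omega),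
        mul_nonneg (show (0:ℤ) ≤ (t:ℤ)-(s₂:ℤ) by omega) (show (0:ℤ) ≤ (t:ℤ)*p - n by linarith)]
  -- natAbs computations for the statement's pairs
  have hnat1 : ((n:ℤ) - (p:ℤ) * (s₁:ℤ)).natAbs = r := by
    have h : (n:ℤ) - (p:ℤ) * s₁ = (r:ℤ) := by rw [hnz]; ring
    rw [h]; exact Int.natAbs_natCast r
  have hnat2 : r ≠ 0 → ((n:ℤ) - (p:ℤ) * (s₂:ℤ)).natAbs = p - r := by
    intro h0
    have hs2' : s₂ = s₁ + 1 := by rw [hs2]; simp [h0]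
    have h : (n:ℤ) - (p:ℤ) * s₂ = -(((p - r : ℕ) : ℤ)) := by
      rw [hs2', hnz]; push_cast [Nat.cast_sub hrp.le]; ring
    rw [h, Int.natAbs_neg]; exact Int.natAbs_natCast _
  -- constraints from minimality
  have hc1r : DA n p s₁ = D → r ≤ p - 2 := by
    intro h
    by_contra hcon
    have hr' : r = p - 1 := by omega
    have h0 : r ≠ 0 := by omega
    have hle : (r + 1) * s₁ ≤ (p - r + 1) * (s₁ + 1) := by
      rw [← hDA1, ← hDA2 h0, h]; exact hDle2
    have hle2 : p * s₁ ≤ 2 * s₁ + 2 := by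
      have e1 : r + 1 = p := by omega
      have e2 : p - r + 1 = 2 := by omega
      rw [e1, e2] at hle; omega
    have hp4 : p ≤ 4 := by nlinarith
    interval_cases p <;> omega
  have hc2r : DA n p s₂ = D → r ≠ 0 → 2 ≤ r := by
    intro h h0
    by_contra hcon
    have hr1 : r = 1 := by omega
    have hle : (p - r + 1) * (s₁ + 1) ≤ (r + 1) * s₁ := by
      rw [← hDA1, ← hDA2 h0, h]; exact hD ▸ min_le_left _ _
    have e1 : p - r + 1 = p := by omega
    rw [e1, hr1] at hle
    have hx : p * (s₁ + 1) = p * s₁ + p := by ring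
    have h3 : 3 * s₁ ≤ p * s₁ := Nat.mul_le_mul_right s₁ hp
    omega
  -- membership of the two candidate pairs
  have hps1 : p ≤ p * s₁ := Nat.le_mul_of_pos_right p (by omega)
  have mem1 : DA n p s₁ = D →
      1 ≤ r + 1 ∧ 1 ≤ p * s₁ ∧ (r + 1) * (p * s₁) = p * D ∧ p ∣ p * s₁ ∧
      ¬ p ∣ (r + 1) ∧ 0 < |((r + 1 : ℕ) : ℤ) - ((p * s₁ : ℕ) : ℤ)| ∧
      |((r + 1 : ℕ) : ℤ) - ((p * s₁ : ℕ) : ℤ)| < (n : ℤ) ∧ n < (r + 1) + p * s₁ := by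
    intro hda
    have hr2 : r ≤ p - 2 := hc1r hda
    refine ⟨by omega, by omega, ?_, dvd_mul_right p s₁, ?_, ?_, ?_, by omega⟩
    · rw [← hda, hDA1]; ring
    · intro hdvd
      have := Nat.le_of_dvd (by omega) hdvd
      omega
    · rw [abs_pos]
      intro hcon
      push_cast at hcon
      omega
    · rw [abs_lt]
      push_cast
      omega
  have mem2 : r ≠ 0 → DA n p s₂ = D →
      1 ≤ p - r + 1 ∧ 1 ≤ p * s₂ ∧ (p - r + 1) * (p * s₂) = p * D ∧ p ∣ p * s₂ ∧
      ¬ p ∣ (p - r + 1) ∧ 0 < |((p - r + 1 : ℕ) : ℤ) - ((p * s₂ : ℕ) : ℤ)| ∧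
      |((p - r + 1 : ℕ) : ℤ) - ((p * s₂ : ℕ) : ℤ)| < (n : ℤ) ∧
      n < (p - r + 1) + p * s₂ := by
    intro h0 hda
    have hr2 : 2 ≤ r := hc2r hda h0
    have hs2' : s₂ = s₁ + 1 := by rw [hs2]; simp [h0]
    have hps2 : p * s₂ = n + (p - r) := by rw [hs2']; have : p*(s₁+1) = p*s₁ + p := by ring
                                           omega
    refine ⟨by omega, by omega, ?_, dvd_mul_right p s₂, ?_, ?_, ?_, by omega⟩
    · rw [← hda, hDA2 h0, hs2']; ring
    · intro hdvd
      have := Nat.le_of_dvd (by omega) hdvd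
      omega
    · rw [abs_pos]
      intro hcon
      push_cast at hcon
      omega
    · rw [abs_lt]
      push_cast
      omega
  have hc : DA n p s₁ = D ∨ DA n p s₂ = D := by
    rcases min_choice (DA n p s₁) (DA n p s₂) with h | h
    · left; omega
    · right; omega
  -- the set equality
  have hEq : {ab : ℕ × ℕ | 1 ≤ ab.1 ∧ 1 ≤ ab.2 ∧ ab.1 * ab.2 = p * D ∧
      p ∣ ab.2 ∧ ¬ p ∣ ab.1 ∧
      0 < |(ab.1 : ℤ) - (ab.2 : ℤ)| ∧ |(ab.1 : ℤ) - (ab.2 : ℤ)| < (n : ℤ) ∧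
      n < ab.1 + ab.2} = {ab : ℕ × ℕ |
        (DA n p s₁ = D ∧ ab = (((n : ℤ) - p * s₁).natAbs + 1, p * s₁)) ∨
        (DA n p s₂ = D ∧ ab = (((n : ℤ) - p * s₂).natAbs + 1, p * s₂))} := by
    ext ⟨a, b⟩
    simp only [Set.mem_setOf_eq]
    constructor
    · rintro ⟨ha1, hb1, hab, ⟨t, hbt⟩, hpa, habs0, habsn, hsum⟩
      have ht1 : 1 ≤ t := by
        rcases Nat.eq_zero_or_pos t with h | h
        · rw [h, Nat.mul_zero] at hbt; omega
        · exact h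
      have hbz : (b:ℤ) = (t:ℤ) * p := by rw [hbt]; push_cast; ring
      rw [abs_lt] at habsn
      have hsumz : (n:ℤ) < (a:ℤ) + b := by exact_mod_cast hsum
      have habs' : ((t:ℤ)*p - n).natAbs < a := by
        have h1 : -(a:ℤ) < (t:ℤ)*p - n := by linarith
        have h2 : (t:ℤ)*p - n < a := by linarith [habsn.1]
        omega
      have hat : a * t = D := by
        refine Nat.eq_of_mul_eq_mul_left hp0 ?_
        rw [← hab, hbt]; ring
      have hDAt : DA n p t ≤ D := by
        calc DA n p t = (((t:ℤ)*p - n).natAbs + 1) * t := rfl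
          _ ≤ a * t := Nat.mul_le_mul (by omega) le_rfl
          _ = D := hat
      have hts : t = s₁ ∨ t = s₂ := by
        by_contra hcon
        push_neg at hcon
        have h := Kmain t ht1 hcon.1 hcon.2
        have : D < DA n p t := by exact_mod_cast h
        omega
      have hDt : DA n p t = D := by
        refine le_antisymm hDAt ?_
        rcases hts with h | h <;> rw [h, hD]
        · exact min_le_left _ _
        · exact min_le_right _ _
      have haeq : a = ((t:ℤ)*p - n).natAbs + 1 := by
        refine Nat.eq_of_mul_eq_mul_right (show 0 < t by omega) ?_
        rw [hat, ← hDt]; rfl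
      have hflip : ∀ s : ℕ, ((n:ℤ) - (p:ℤ)*s).natAbs = ((s:ℤ)*p - n).natAbs := by
        intro s
        rw [show (n:ℤ) - (p:ℤ)*s = -((s:ℤ)*p - n) by ring, Int.natAbs_neg]
      rcases hts with h | h
      · left
        refine ⟨by rw [← h]; exact hDt, ?_⟩
        rw [Prod.ext_iff]
        exact ⟨by rw [haeq, h, hflip], by rw [hbt, h]⟩
      · right
        refine ⟨by rw [← h]; exact hDt, ?_⟩
        rw [Prod.ext_iff]
        exact ⟨by rw [haeq, h, hflip], by rw [hbt, h]⟩
    · rintro (⟨hda, hab⟩ | ⟨hda, hab⟩)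
      · rw [Prod.ext_iff] at hab
        obtain ⟨ha, hb⟩ := hab
        simp only at ha hb
        rw [hnat1] at ha
        obtain ⟨m1, m2, m3, m4, m5, m6, m7, m8⟩ := mem1 hda
        subst ha; subst hb
        exact ⟨m1, m2, m3, m4, m5, m6, m7, m8⟩
      · rcases eq_or_ne r 0 with h0 | h0
        · have hs2' : s₂ = s₁ := by rw [hs2]; simp [h0]
          rw [hs2'] at hda hab
          rw [Prod.ext_iff] at hab
          obtain ⟨ha, hb⟩ := hab
          simp only at ha hb
          rw [hnat1] at ha
          obtain ⟨m1, m2, m3, m4, m5, m6, m7, m8⟩ := mem1 hda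
          subst ha; subst hb
          exact ⟨m1, m2, m3, m4, m5, m6, m7, m8⟩
        · rw [Prod.ext_iff] at hab
          obtain ⟨ha, hb⟩ := hab
          simp only at ha hb
          rw [hnat2 h0] at ha
          obtain ⟨m1, m2, m3, m4, m5, m6, m7, m8⟩ := mem2 h0 hda
          subst ha; subst hb
          exact ⟨m1, m2, m3, m4, m5, m6, m7, m8⟩
  refine ⟨hEq, ?_, ?_⟩
  · rw [hEq]
    rcases hc with h | h
    · exact ⟨_, Or.inl ⟨h, rfl⟩⟩
    · exact ⟨_, Or.inr ⟨h, rfl⟩⟩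
  · rw [hEq]
    have hdvd : p ∣ n ↔ r = 0 := by
      rw [← hr]; exact Nat.dvd_iff_mod_eq_zero
    constructor
    · intro hcard
      by_contra hcon
      -- in every failing case the set is a singleton
      have hsingle : ∃ e, {ab : ℕ × ℕ |
          (DA n p s₁ = D ∧ ab = (((n : ℤ) - p * s₁).natAbs + 1, p * s₁)) ∨
          (DA n p s₂ = D ∧ ab = (((n : ℤ) - p * s₂).natAbs + 1, p * s₂))} = {e} := by
        rcases eq_or_ne r 0 with h0 | h0
        · -- s₂ = s₁, both branches give the same element
          have hs2' : s₂ = s₁ := by rw [hs2]; simp [h0]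
          refine ⟨(((n : ℤ) - p * s₁).natAbs + 1, p * s₁), ?_⟩
          ext x
          simp only [Set.mem_setOf_eq, Set.mem_singleton_iff]
          constructor
          · rintro (⟨_, h⟩ | ⟨_, h⟩)
            · exact h
            · rw [hs2'] at h; exact h
          · intro h
            rcases hc with hcc | hcc
            · exact Or.inl ⟨hcc, h⟩
            · exact Or.inr ⟨hcc, by rw [hs2']; exact h⟩
        · -- r ≠ 0 and hcon means DA s₁ ≠ DA s₂, so exactly one branch active
          have hne : DA n p s₁ ≠ DA n p s₂ := by
            intro h
            exact hcon ⟨fun hd => h0 (hdvd.mp hd), h⟩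
          rcases hc with hcc | hcc
          · refine ⟨(((n : ℤ) - p * s₁).natAbs + 1, p * s₁), ?_⟩
            ext x
            simp only [Set.mem_setOf_eq, Set.mem_singleton_iff]
            constructor
            · rintro (⟨_, h⟩ | ⟨hd, h⟩)
              · exact h
              · exact absurd (hcc.trans hd.symm) hne
            · intro h; exact Or.inl ⟨hcc, h⟩
          · refine ⟨(((n : ℤ) - p * s₂).natAbs + 1, p * s₂), ?_⟩
            ext x
            simp only [Set.mem_setOf_eq, Set.mem_singleton_iff]
            constructor
            · rintro (⟨hd, h⟩ | ⟨_, h⟩)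
              · exact absurd (hd.trans hcc.symm) hne
              · exact h
            · intro h; exact Or.inr ⟨hcc, h⟩
      obtain ⟨e, he⟩ := hsingle
      rw [he, Set.ncard_singleton] at hcard
      omega
    · rintro ⟨hnd, heq⟩
      have h0 : r ≠ 0 := fun h => hnd (hdvd.mpr h)
      have hs2' : s₂ = s₁ + 1 := by rw [hs2]; simp [h0]
      have hc1 : DA n p s₁ = D := by
        rw [hD, heq, min_self]
      have hc2 : DA n p s₂ = D := by
        rw [hD, ← heq, min_self]
      have hpair : {ab : ℕ × ℕ |
          (DA n p s₁ = D ∧ ab = (((n : ℤ) - p * s₁).natAbs + 1, p * s₁)) ∨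
          (DA n p s₂ = D ∧ ab = (((n : ℤ) - p * s₂).natAbs + 1, p * s₂))} =
          {((((n : ℤ) - p * s₁).natAbs + 1, p * s₁) : ℕ × ℕ),
           ((((n : ℤ) - p * s₂).natAbs + 1, p * s₂) : ℕ × ℕ)} := by
        ext x
        simp only [Set.mem_setOf_eq, Set.mem_insert_iff, Set.mem_singleton_iff]
        constructor
        · rintro (⟨_, h⟩ | ⟨_, h⟩)
          · exact Or.inl h
          · exact Or.inr h
        · rintro (h | h)
          · exact Or.inl ⟨hc1, h⟩
          · exact Or.inr ⟨hc2, h⟩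
      rw [hpair]
      refine Set.ncard_pair ?_
      intro hcon
      rw [Prod.ext_iff] at hcon
      have h2 := hcon.2
      simp only at h2
      rw [hs2'] at h2
      have : p * (s₁ + 1) = p * s₁ + p := by ring
      omega
end

section
/- Let n ≥ 2 and let μ : Fin n → ℤ. Then Ã_D(μ) = Σ_{g ∈ W_D} sgn(g)·X^{g·μ} equals 0 in the group algebra if and only if |μ_i| = |μ_j| for some pair of distinct indices i ≠ j. -/
open Finset

/-- The group `W_D` of even-signed permutations on `n` letters: pairs
`g = (σ, ε)` with `σ ∈ S_n` and `ε : Fin n → {±1}` satisfying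
`ε_1⋯ε_n = 1` (the Weyl group of type `D_n`). -/
abbrev WD (n : ℕ) := {g : Equiv.Perm (Fin n) × (Fin n → ℤˣ) // (∏ i, g.2 i) = 1}

/-- The action of `g = (σ, ε) ∈ W_D` on tuples: `(g·μ)_i = ε_i · μ_{σ⁻¹(i)}`. -/
def WDact (n : ℕ) (g : WD n) (μ : Fin n → ℤ) : Fin n → ℤ :=
  fun i => ((g.1.2 i : ℤ)) * μ (g.1.1⁻¹ i)

/-- The alternating sum `Ã_D(μ) = Σ_{g ∈ W_D} sgn(g)·X^{g·μ}` in the group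
algebra `AddMonoidAlgebra ℤ (Fin n → ℤ)`, with `sgn(σ, ε) = sign σ`. -/
noncomputable def AtildeD (n : ℕ) (μ : Fin n → ℤ) : AddMonoidAlgebra ℤ (Fin n → ℤ) :=
  ∑ g : WD n, (Equiv.Perm.sign g.1.1 : ℤ) • AddMonoidAlgebra.single (WDact n g μ) 1

/-!
If the `|μ_i|` are pairwise distinct, the stabiliser of `μ` in `W_D` is trivial: a signed
permutation fixing `μ` must fix every index, and may flip the sign only of a coordinate
`μ_k = 0`; there is at most one such `k`, and the parity condition `∏ ε_i = 1` forbids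
flipping it alone. Hence the coefficient of `X^μ` in `Ã_D(μ)` is `1`. Conversely, if
`|μ_i| = |μ_j|` with `i ≠ j`, the element `(swap i j, ε)` with `ε_i = ε_j = ±1` chosen so that
it fixes `μ` has sign `-1`, and right multiplication by it pairs the terms of `Ã_D(μ)` into
cancelling pairs.
-/

namespace WD

variable {n : ℕ}

def one : WD n := ⟨1, prod_const_one⟩

def mul (g h : WD n) : WD n :=
  ⟨(g.1.1 * h.1.1, fun k => g.1.2 k * h.1.2 (g.1.1⁻¹ k)), by
    rw [prod_mul_distrib, g.2, one_mul, Fintype.prod_equiv g.1.1⁻¹ _ h.1.2 fun _ => rfl, h.2]⟩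

theorem mul_assoc (g h k : WD n) : mul (mul g h) k = mul g (mul h k) :=
  Subtype.ext <| Prod.ext (_root_.mul_assoc _ _ _) <| funext fun _ => by
    simp [mul, _root_.mul_assoc]

theorem mul_one (g : WD n) : mul g one = g :=
  Subtype.ext <| Prod.ext (_root_.mul_one _) <| funext fun _ => by simp [mul, one]

def swapSign (i j : Fin n) (s : ℤˣ) : WD n :=
  ⟨(Equiv.swap i j, Pi.mulSingle i s * Pi.mulSingle j s), by
    simp [prod_mul_distrib, Int.units_mul_self]⟩

theorem swapSign_mul_self (i j : Fin n) (s : ℤˣ) : mul (swapSign i j s) (swapSign i j s) = one := by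
  refine Subtype.ext <| Prod.ext (Equiv.swap_mul_self i j) <| funext fun k => ?_
  simp only [mul, swapSign, one, Equiv.swap_inv, Pi.mul_apply, Pi.mulSingle_apply,
    Equiv.swap_apply_def]
  split_ifs <;> simp_all [Int.units_mul_self]

end WD

variable {n : ℕ}

theorem WDact_mul (g h : WD n) (μ : Fin n → ℤ) :
    WDact n (WD.mul g h) μ = WDact n g (WDact n h μ) := by
  funext k
  simp [WDact, WD.mul, mul_assoc]

theorem WDact_one (μ : Fin n → ℤ) : WDact n WD.one μ = μ := by
  funext k
  simp [WDact, WD.one]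

theorem WDact_swapSign {μ : Fin n → ℤ} {i j : Fin n} {s : ℤˣ}
    (hi : (s : ℤ) * μ j = μ i) (hj : (s : ℤ) * μ i = μ j) :
    WDact n (WD.swapSign i j s) μ = μ := by
  funext k
  simp only [WDact, WD.swapSign, Equiv.swap_inv, Pi.mul_apply, Pi.mulSingle_apply,
    Equiv.swap_apply_def]
  split_ifs <;> simp_all [Int.units_mul_self]

theorem WD.eq_one_of_WDact_eq_self {μ : Fin n → ℤ} (hμ : Function.Injective fun i => |μ i|)
    {g : WD n} (hg : WDact n g μ = μ) : g = WD.one := by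
  have hact (k : Fin n) : (g.1.2 k : ℤ) * μ (g.1.1⁻¹ k) = μ k := congrFun hg k
  have habs (u : ℤˣ) (a : ℤ) : |(u : ℤ) * a| = |a| := by
    rw [abs_mul, Int.abs_eq_natAbs u, Int.units_natAbs, Nat.cast_one, one_mul]
  have hσ (k : Fin n) : g.1.1⁻¹ k = k := hμ <| show |μ _| = |μ k| by rw [← hact k, habs]
  have hε_of_ne_zero (k : Fin n) (hk : μ k ≠ 0) : g.1.2 k = 1 := by
    have hfix := hact k
    rw [hσ] at hfix
    exact Units.val_eq_one.mp (mul_right_cancel₀ hk (hfix.trans (one_mul _).symm))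
  have hε (k : Fin n) : g.1.2 k = 1 := by
    by_cases hk : μ k = 0
    · have hprod := g.2
      rwa [Fintype.prod_eq_single k fun j hj => hε_of_ne_zero j fun h0 =>
        hj (hμ (show |μ j| = |μ k| by rw [h0, hk]))] at hprod
    · exact hε_of_ne_zero k hk
  exact Subtype.ext <| Prod.ext (inv_eq_one.mp (Equiv.ext hσ)) (funext hε)

theorem AtildeD_coeff (μ ν : Fin n → ℤ) :
    (AtildeD n μ).coeff ν =
      ∑ g : WD n, if WDact n g μ = ν then (Equiv.Perm.sign g.1.1 : ℤ) else 0 := by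
  rw [AtildeD, AddMonoidAlgebra.coeff_sum, Finset.sum_apply']
  refine Finset.sum_congr rfl fun g _ => ?_
  rw [AddMonoidAlgebra.coeff_smul, AddMonoidAlgebra.coeff_single, Finsupp.smul_apply,
    Finsupp.single_apply]
  split <;> simp

theorem AtildeD_coeff_self_of_injective {μ : Fin n → ℤ}
    (hμ : Function.Injective fun i => |μ i|) : (AtildeD n μ).coeff μ = 1 := by
  rw [AtildeD_coeff, Fintype.sum_eq_single WD.one fun g hg =>
    if_neg fun hfix => hg (WD.eq_one_of_WDact_eq_self hμ hfix), if_pos (WDact_one μ)]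
  simp [WD.one]

theorem AtildeD_eq_zero_of_fixed_by_odd_involution {μ : Fin n → ℤ} (g₀ : WD n)
    (hsign : Equiv.Perm.sign g₀.1.1 = -1) (hsq : WD.mul g₀ g₀ = WD.one)
    (hfix : WDact n g₀ μ = μ) : AtildeD n μ = 0 := by
  have hsign_mul (g : WD n) : Equiv.Perm.sign (WD.mul g g₀).1.1 = -Equiv.Perm.sign g.1.1 := by
    simp [WD.mul, Equiv.Perm.sign_mul, hsign]
  refine Finset.sum_involution (fun g _ => WD.mul g g₀) (fun g _ => ?_) (fun g _ _ hg => ?_)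
    (fun _ _ => mem_univ _) (fun g _ => by rw [WD.mul_assoc, hsq, WD.mul_one])
  · rw [WDact_mul, hfix, hsign_mul, Units.val_neg, neg_smul, add_neg_cancel]
  · exact units_ne_neg_self _ (by rw [← hsign_mul, hg])

theorem exists_units_mul_eq_of_abs_eq {a b : ℤ} (h : |a| = |b|) :
    ∃ s : ℤˣ, (s : ℤ) * b = a ∧ (s : ℤ) * a = b := by
  rcases abs_eq_abs.mp h with rfl | rfl
  · exact ⟨1, by simp, by simp⟩
  · exact ⟨-1, by simp, by simp⟩

theorem stmt16_general (n : ℕ) (μ : Fin n → ℤ) :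
    AtildeD n μ = 0 ↔ ∃ i j : Fin n, i ≠ j ∧ |μ i| = |μ j| := by
  constructor
  · intro h0
    by_contra hμ
    have hinj : Function.Injective fun i => |μ i| := fun i j hij => by
      by_contra hne
      exact hμ ⟨i, j, hne, hij⟩
    simpa [h0] using AtildeD_coeff_self_of_injective hinj
  · rintro ⟨i, j, hij, habs⟩
    obtain ⟨s, hi, hj⟩ := exists_units_mul_eq_of_abs_eq habs
    exact AtildeD_eq_zero_of_fixed_by_odd_involution (WD.swapSign i j s) (Equiv.Perm.sign_swap hij)
      (WD.swapSign_mul_self i j s) (WDact_swapSign hi hj)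

/-- Lemma 5.2 of the paper, type `D`.
For `n ≥ 2` and `μ : Fin n → ℤ`, the alternating sum `Ã_D(μ)` vanishes in the
group algebra if and only if `|μ_i| = |μ_j|` for some pair of distinct
indices. -/
theorem stmt16 (n : ℕ) (hn : 2 ≤ n) (μ : Fin n → ℤ) :
    AtildeD n μ = 0 ↔ ∃ i j : Fin n, i ≠ j ∧ |μ i| = |μ j| :=
  stmt16_general n μ
end

section
/- Let n ≥ 2 and let μ, ν : Fin n → ℤ. If Ã(μ) = Ã(ν) ≠ 0 or Ã(μ) = −Ã(ν) ≠ 0 in the group algebra, then ν lies in the S_n-orbit of μ, i.e. ν = μ ∘ σ for some permutation σ ∈ S_n. (This is the type-A instance of the statement that if E^ρ(λ₁) = ±E^ρ(λ₂) ≠ 0 then λ₁ and λ₂ lie in the same shifted Weyl-group orbit.) -/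
open Finset

/-
If `Ã(ν) ≠ 0`, it has a nonzero coefficient at some monomial `X^x`. Every monomial occurring in
`Ã(μ)` is of the form `X^{σ·μ}`, and the hypothesis makes `X^x` occur in `Ã(μ)` as well as in
`Ã(ν)`, so `σ·μ = x = τ·ν` for some permutations `σ, τ`, which puts `ν` in the orbit of `μ`.
-/

lemma AddMonoidAlgebra.exists_coeff_ne_zero {R M : Type*} [Semiring R] [AddMonoid M]
    {x : AddMonoidAlgebra R M} (hx : x ≠ 0) : ∃ m, x.coeff m ≠ 0 := by
  by_contra! h
  exact hx (AddMonoidAlgebra.ext (Finsupp.ext h))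

lemma exists_perm_of_coeff_Atilde_ne_zero {n : ℕ} {μ x : Fin n → ℤ}
    (hx : (Atilde n μ).coeff x ≠ 0) : ∃ σ : Equiv.Perm (Fin n), x = fun i => μ (σ⁻¹ i) := by
  contrapose! hx
  simp only [Atilde, AddMonoidAlgebra.coeff_sum, AddMonoidAlgebra.coeff_smul,
    AddMonoidAlgebra.coeff_single, Finsupp.finsetSum_apply]
  exact sum_eq_zero fun σ _ => by
    rw [Finsupp.smul_apply, Finsupp.single_apply, if_neg (hx σ).symm, smul_zero]

lemma exists_perm_eq_comp_of_perm_smul_eq {ι α : Type*} {μ ν : ι → α} {σ τ : Equiv.Perm ι}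
    (h : (fun i => μ (σ⁻¹ i)) = fun i => ν (τ⁻¹ i)) : ∃ π : Equiv.Perm ι, ν = μ ∘ π :=
  ⟨τ.trans σ⁻¹, funext fun j => by simpa using (congrFun h (τ j)).symm⟩

theorem stmt19_general (n : ℕ) (μ ν : Fin n → ℤ)
    (h : (Atilde n μ = Atilde n ν ∧ Atilde n ν ≠ 0) ∨
         (Atilde n μ = - Atilde n ν ∧ Atilde n ν ≠ 0)) :
    ∃ σ : Equiv.Perm (Fin n), ν = μ ∘ σ := by
  have hν : Atilde n ν ≠ 0 := h.elim And.right And.right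
  obtain ⟨x, hxν⟩ := AddMonoidAlgebra.exists_coeff_ne_zero hν
  have hxμ : (Atilde n μ).coeff x ≠ 0 := by
    rcases h with ⟨heq, -⟩ | ⟨heq, -⟩ <;> simpa [heq] using hxν
  obtain ⟨σ, hσ⟩ := exists_perm_of_coeff_Atilde_ne_zero hxμ
  obtain ⟨τ, hτ⟩ := exists_perm_of_coeff_Atilde_ne_zero hxν
  exact exists_perm_eq_comp_of_perm_smul_eq (hσ.symm.trans hτ)

/-- Lemma 3.1 (2) of the paper, type `A`.
For `n ≥ 2` and tuples `μ, ν : Fin n → ℤ`: if `Ã(μ) = Ã(ν) ≠ 0` or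
`Ã(μ) = −Ã(ν) ≠ 0`, then `ν` lies in the `S_n`-orbit of `μ`. -/
theorem stmt19 (n : ℕ) (hn : 2 ≤ n) (μ ν : Fin n → ℤ)
    (h : (Atilde n μ = Atilde n ν ∧ Atilde n ν ≠ 0) ∨
         (Atilde n μ = - Atilde n ν ∧ Atilde n ν ≠ 0)) :
    ∃ σ : Equiv.Perm (Fin n), ν = μ ∘ σ :=
  stmt19_general n μ ν h
end
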